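/- arXiv:2103.08344 — 15 statements merged into one kernel-verified Lean document; each statement's English description precedes it below -/
import Mathlib

section
/- Let γ⁺ and γ⁻ be positive real numbers, and let ρ ≥ 0 and n ≥ 0 be real numbers with ρ + n > 0. Then there exists a unique real number x > 0 such that x^(γ⁺/γ⁻)·(x − ρ) = n·x; moreover this unique x satisfies x ≥ ρ. -/
/-!
Dividing by `x > 0`, the equation reads `φ x = n` with `φ x = x ^ a * (1 - ρ / x)`, `a = γ⁺/γ⁻`.
A root has `x - ρ ≥ 0` because its right-hand side `n x` is nonnegative. On `x ≥ ρ` both factors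
of `φ` are nonnegative and increasing, the first one strictly, so `φ` is injective there. Since
`φ ρ = 0`, `φ x ≤ x ^ a`, and `φ x ≥ x ^ a / 2` once `x ≥ 2ρ`, the intermediate value theorem
on `[max ρ n^(1/a), max 2ρ (2n)^(1/a)]` gives a root.
-/

open Real Set

noncomputable section

def balanceFun (a ρ x : ℝ) : ℝ := x ^ a * (1 - ρ / x)

variable {a ρ n x : ℝ}

lemma rpow_mul_sub_eq_iff_balanceFun_eq (hx : 0 < x) :
    x ^ a * (x - ρ) = n * x ↔ balanceFun a ρ x = n := by
  have : x ^ a * (x - ρ) = balanceFun a ρ x * x := by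
    unfold balanceFun; field_simp
  rw [this, mul_left_inj' hx.ne']

lemma le_of_rpow_mul_sub_eq (hn : 0 ≤ n) (hx : 0 < x) (h : x ^ a * (x - ρ) = n * x) :
    ρ ≤ x := by
  have : 0 ≤ x ^ a * (x - ρ) := h ▸ mul_nonneg hn hx.le
  exact sub_nonneg.1 <| (mul_nonneg_iff_of_pos_left (rpow_pos_of_pos hx a)).1 this

lemma balanceFun_self (ha : a ≠ 0) (ρ : ℝ) : balanceFun a ρ ρ = 0 := by
  rcases eq_or_ne ρ 0 with rfl | hρ
  · simp [balanceFun, zero_rpow ha]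
  · simp [balanceFun, div_self hρ]

lemma balanceFun_le_rpow (hρ : 0 ≤ ρ) (hx : 0 ≤ x) : balanceFun a ρ x ≤ x ^ a := by
  unfold balanceFun
  have : 0 ≤ ρ / x := div_nonneg hρ hx
  nlinarith [rpow_nonneg hx a]

lemma half_rpow_le_balanceFun (hx : 0 < x) (hρx : 2 * ρ ≤ x) :
    x ^ a / 2 ≤ balanceFun a ρ x := by
  unfold balanceFun
  have : ρ / x ≤ 1 / 2 := by rw [div_le_iff₀ hx]; linarith
  nlinarith [rpow_pos_of_pos hx a]

lemma continuousOn_balanceFun (a ρ : ℝ) : ContinuousOn (balanceFun a ρ) (Ioi 0) :=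
  ((continuousOn_id.rpow_const fun _ hx => Or.inl (ne_of_gt hx)).mul
    (continuousOn_const.sub (continuousOn_const.div continuousOn_id fun _ hx => ne_of_gt hx)))

lemma strictMonoOn_balanceFun (ha : 0 < a) (hρ : 0 ≤ ρ) :
    StrictMonoOn (balanceFun a ρ) (Ioi 0 ∩ Ici ρ) := by
  rintro x ⟨hx, hρx⟩ y ⟨hy, -⟩ hxy
  calc x ^ a * (1 - ρ / x)
      ≤ x ^ a * (1 - ρ / y) := by
        gcongr
        exact rpow_nonneg hx.le a
    _ < y ^ a * (1 - ρ / y) := by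
        gcongr
        · rw [sub_pos, div_lt_one hy]; exact hρx.trans_lt hxy
        · exact hx.le

lemma exists_balanceFun_eq (ha : 0 < a) (hρ : 0 ≤ ρ) (hn : 0 ≤ n) (hsum : 0 < ρ + n) :
    ∃ x, 0 < x ∧ ρ ≤ x ∧ balanceFun a ρ x = n := by
  set L := max ρ (n ^ a⁻¹) with hL_def
  set M := max (2 * ρ) ((2 * n) ^ a⁻¹)
  have hL : 0 < L := by
    rcases hρ.lt_or_eq with hρ | rfl
    · exact lt_max_of_lt_left hρ
    · exact lt_max_of_lt_right (rpow_pos_of_pos (by linarith) _)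
  have hLM : L ≤ M :=
    max_le_max (by linarith) (rpow_le_rpow hn (by linarith) (inv_nonneg.2 ha.le))
  have hφL : balanceFun a ρ L ≤ n := by
    rcases le_total ρ (n ^ a⁻¹) with h | h
    · rw [hL_def, max_eq_right h]
      exact (balanceFun_le_rpow hρ (rpow_nonneg hn _)).trans (rpow_inv_rpow hn ha.ne').le
    · rw [hL_def, max_eq_left h, balanceFun_self ha.ne']
      exact hn
  have hφM : n ≤ balanceFun a ρ M := by
    have h2n : 2 * n ≤ M ^ a :=
      calc 2 * n = ((2 * n) ^ a⁻¹) ^ a := (rpow_inv_rpow (by linarith) ha.ne').symm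
        _ ≤ M ^ a := rpow_le_rpow (rpow_nonneg (by linarith) _) (le_max_right _ _) ha.le
    linarith [half_rpow_le_balanceFun (a := a) (hL.trans_le hLM) (le_max_left _ _)]
  obtain ⟨x, hx, hφx⟩ := intermediate_value_Icc hLM
    ((continuousOn_balanceFun a ρ).mono ((Icc_subset_Ioi_iff hLM).2 hL)) ⟨hφL, hφM⟩
  exact ⟨x, hL.trans_le hx.1, (le_max_left _ _).trans hx.1, hφx⟩

end

/-- For positive exponents γ⁺, γ⁻ and ρ, n ≥ 0 with ρ + n > 0, there is a unique
positive root `x` of `x^(γ⁺/γ⁻)·(x − ρ) = n·x`, and every such root satisfies `ρ ≤ x`. -/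
theorem biFluid_dominant_density_exists_unique
    (gp gm ρ n : ℝ) (hgp : 0 < gp) (hgm : 0 < gm)
    (hρ : 0 ≤ ρ) (hn : 0 ≤ n) (hsum : 0 < ρ + n) :
    (∃! x : ℝ, 0 < x ∧ x ^ (gp / gm) * (x - ρ) = n * x) ∧
      (∀ x : ℝ, 0 < x → x ^ (gp / gm) * (x - ρ) = n * x → ρ ≤ x) := by
  have ha : 0 < gp / gm := div_pos hgp hgm
  have root_ge : ∀ x : ℝ, 0 < x → x ^ (gp / gm) * (x - ρ) = n * x → ρ ≤ x :=
    fun x hx h => le_of_rpow_mul_sub_eq hn hx h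
  obtain ⟨x, hx, hρx, hφx⟩ := exists_balanceFun_eq ha hρ hn hsum
  refine ⟨⟨x, ⟨hx, (rpow_mul_sub_eq_iff_balanceFun_eq hx).2 hφx⟩, ?_⟩, root_ge⟩
  rintro y ⟨hy, hyx⟩
  exact (strictMonoOn_balanceFun ha hρ).injOn ⟨hy, root_ge y hy hyx⟩ ⟨hx, hρx⟩
    (((rpow_mul_sub_eq_iff_balanceFun_eq hy).1 hyx).trans hφx.symm)
end

section
/- Let γ⁺, γ⁻ > 0, let ρ ≥ 0 and n ≥ 0 with ρ + n > 0, and let x > 0 satisfy x^(γ⁺/γ⁻)·(x − ρ) = n·x. Then, with q̲ := min{1, γ⁻/γ⁺} and q̄ := max{1, γ⁻/γ⁺}, one has max{ρ, q̲·(ρ + n^(γ⁻/γ⁺))} ≤ x ≤ q̄·(ρ + n^(γ⁻/γ⁺)). -/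
/-!
Put `t := (x - ρ) / x` and `β := γ⁻/γ⁺`. The defining equation says `n = x ^ (γ⁺/γ⁻) * t`, so
`t ∈ [0, 1]`, `ρ = x (1 - t)` and `n ^ β = x t ^ β`. Dividing by `x`, both bounds reduce to
`min 1 β * (1 - t + t ^ β) ≤ 1 ≤ max 1 β * (1 - t + t ^ β)` on `[0, 1]`, which follows from
comparing `t ^ β` with `t` and from Bernoulli's inequality `t ^ β ≶ 1 + β (t - 1)`.
-/

namespace Real

variable {β t : ℝ}

theorem min_one_mul_one_sub_add_rpow_le_one (hβ : 0 ≤ β) (ht₀ : 0 ≤ t) (ht₁ : t ≤ 1) :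
    min 1 β * (1 - t + t ^ β) ≤ 1 := by
  rcases le_total β 1 with hβ₁ | hβ₁
  · have bernoulli : t ^ β ≤ 1 + β * (t - 1) := by
      simpa using rpow_one_add_le_one_add_mul_self (s := t - 1) (by linarith) hβ hβ₁
    rw [min_eq_right hβ₁]
    nlinarith [rpow_nonneg ht₀ β]
  · have : t ^ β ≤ t := rpow_le_self_of_le_one ht₀ ht₁ hβ₁
    rw [min_eq_left hβ₁]
    linarith

theorem one_le_max_one_mul_one_sub_add_rpow (ht₀ : 0 ≤ t) (ht₁ : t ≤ 1) :
    1 ≤ max 1 β * (1 - t + t ^ β) := by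
  rcases le_total β 1 with hβ₁ | hβ₁
  · have : t ≤ t ^ β := self_le_rpow_of_le_one ht₀ ht₁ hβ₁
    rw [max_eq_left hβ₁]
    linarith
  · have bernoulli : 1 + β * (t - 1) ≤ t ^ β := by
      simpa using one_add_mul_self_le_rpow_one_add (s := t - 1) (by linarith) hβ₁
    rw [max_eq_right hβ₁]
    nlinarith [rpow_nonneg ht₀ β]

end Real

theorem biFluid_dominant_density_bounds_general
    (gp gm ρ n x : ℝ) (hgp : 0 < gp) (hgm : 0 < gm)
    (hρ : 0 ≤ ρ) (hn : 0 ≤ n)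
    (hx : 0 < x) (heq : x ^ (gp / gm) * (x - ρ) = n * x) :
    max ρ (min 1 (gm / gp) * (ρ + n ^ (gm / gp))) ≤ x ∧
      x ≤ max 1 (gm / gp) * (ρ + n ^ (gm / gp)) := by
  set t := (x - ρ) / x
  have hn_eq : n = x ^ (gp / gm) * t := by
    rw [← mul_div_assoc]
    exact eq_div_of_mul_eq hx.ne' heq.symm
  have ht₀ : 0 ≤ t := nonneg_of_mul_nonneg_right (hn_eq ▸ hn) (Real.rpow_pos_of_pos hx _)
  have ht₁ : t ≤ 1 := by
    rw [div_le_one hx]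
    linarith
  have hρ_eq : ρ = x * (1 - t) := by
    have : x * t = x - ρ := mul_div_cancel₀ _ hx.ne'
    linarith
  have hn_rpow : n ^ (gm / gp) = x * t ^ (gm / gp) := by
    have : gp / gm * (gm / gp) = 1 := by field_simp
    rw [hn_eq, Real.mul_rpow (Real.rpow_nonneg hx.le _) ht₀, ← Real.rpow_mul hx.le, this,
      Real.rpow_one]
  have hsum_eq : ρ + n ^ (gm / gp) = x * (1 - t + t ^ (gm / gp)) := by
    rw [hρ_eq, hn_rpow]
    ring
  rw [hsum_eq, mul_left_comm, mul_left_comm (max _ _)]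
  refine ⟨max_le (by nlinarith) ?_, ?_⟩
  · simpa using mul_le_mul_of_nonneg_left
      (Real.min_one_mul_one_sub_add_rpow_le_one (div_pos hgm hgp).le ht₀ ht₁) hx.le
  · simpa using mul_le_mul_of_nonneg_left (Real.one_le_max_one_mul_one_sub_add_rpow ht₀ ht₁) hx.le

/-- Bounds for the dominant density: `max {ρ, q̲(ρ + n^(γ⁻/γ⁺))} ≤ ρ₊ ≤ q̄(ρ + n^(γ⁻/γ⁺))`. -/
theorem biFluid_dominant_density_bounds
    (gp gm ρ n x : ℝ) (hgp : 0 < gp) (hgm : 0 < gm)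
    (hρ : 0 ≤ ρ) (hn : 0 ≤ n) (hsum : 0 < ρ + n)
    (hx : 0 < x) (heq : x ^ (gp / gm) * (x - ρ) = n * x) :
    max ρ (min 1 (gm / gp) * (ρ + n ^ (gm / gp))) ≤ x ∧
      x ≤ max 1 (gm / gp) * (ρ + n ^ (gm / gp)) :=
  biFluid_dominant_density_bounds_general gp gm ρ n x hgp hgm hρ hn hx heq
end

section
/- Let γ⁺ ≥ 1 and γ⁻ > 0 be real numbers, let ρ ≥ 0 and n ≥ 0 with ρ + n > 0, and let x > 0 satisfy x^(γ⁺/γ⁻)·(x − ρ) = n·x. Then, with q̲ := min{1, γ⁻/γ⁺} and q̄ := max{1, γ⁻/γ⁺}, the pressure value x^γ⁺ satisfies q̲^γ⁺·(ρ^γ⁺ + n^γ⁻) ≤ x^γ⁺ ≤ (2·q̄)^γ⁺·(ρ^γ⁺ + n^γ⁻). -/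
/-!
Put `a = γ⁺/γ⁻` and `u = n^(1/a)`, so that `u^γ⁺ = n^γ⁻`. Dividing the defining equation by
`x^a` gives `x - ρ = x·r^a` with `r = u/x`, and `r ≤ 1` because `ρ ≥ 0`. Hence
`ρ + u = x·(1 - r^a + r)`, and Bernoulli's inequality (in its convex or concave form,
according to `a ≥ 1` or `a ≤ 1`) traps `1 - r^a + r` between `min 1 a` and `max 1 a`.
So `x` is comparable to `ρ + u`, and raising to the power `γ⁺ ≥ 1` the bounds follow from
`ρ^γ⁺ + u^γ⁺ ≤ (ρ + u)^γ⁺ ≤ 2^γ⁺·(ρ^γ⁺ + u^γ⁺)`.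
-/

open Real

namespace Real

theorem min_one_le_one_sub_rpow_add {a r : ℝ} (ha : 0 ≤ a) (hr₀ : 0 ≤ r) (hr₁ : r ≤ 1) :
    min 1 a ≤ 1 - r ^ a + r := by
  rcases le_total a 1 with h | h
  · have hconc : r ^ a ≤ 1 + a * (r - 1) := by
      simpa using rpow_one_add_le_one_add_mul_self (s := r - 1) (by linarith) ha h
    nlinarith [min_le_right 1 a]
  · have : r ^ a ≤ r := by simpa using rpow_le_rpow_of_exponent_ge' hr₀ hr₁ zero_le_one h
    linarith [min_le_left 1 a]

theorem one_sub_rpow_add_le_max_one {a r : ℝ} (ha : 0 ≤ a) (hr₀ : 0 ≤ r) (hr₁ : r ≤ 1) :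
    1 - r ^ a + r ≤ max 1 a := by
  rcases le_total a 1 with h | h
  · have : r ≤ r ^ a := by simpa using rpow_le_rpow_of_exponent_ge' hr₀ hr₁ ha h
    linarith [le_max_left 1 a]
  · have hconv : 1 + a * (r - 1) ≤ r ^ a := by
      simpa using one_add_mul_self_le_rpow_one_add (s := r - 1) (by linarith) h
    nlinarith [le_max_right 1 a]

theorem add_rpow_le_two_rpow_mul_add_rpow {a b p : ℝ} (ha : 0 ≤ a) (hb : 0 ≤ b) (hp : 0 ≤ p) :
    (a + b) ^ p ≤ 2 ^ p * (a ^ p + b ^ p) := by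
  have hmax : max a b ^ p ≤ a ^ p + b ^ p := by
    rcases max_choice a b with h | h <;> rw [h]
    · linarith [rpow_nonneg hb p]
    · linarith [rpow_nonneg ha p]
  calc (a + b) ^ p ≤ (2 * max a b) ^ p := by
        gcongr
        linarith [le_max_left a b, le_max_right a b]
    _ = 2 ^ p * max a b ^ p := mul_rpow zero_le_two (le_max_of_le_left ha)
    _ ≤ 2 ^ p * (a ^ p + b ^ p) := by gcongr

end Real

section LinearOrderedField

variable {α : Type*} [Field α] [LinearOrder α] [IsStrictOrderedRing α]

theorem min_one_inv_eq_inv_max_one {a : α} (ha : 0 < a) : min 1 a⁻¹ = (max 1 a)⁻¹ := by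
  rcases le_total a 1 with h | h
  · rw [max_eq_left h, min_eq_left (one_le_inv_iff₀.2 ⟨ha, h⟩), inv_one]
  · rw [max_eq_right h, min_eq_right (inv_le_one_of_one_le₀ h)]

theorem max_one_inv_eq_inv_min_one {a : α} (ha : 0 < a) : max 1 a⁻¹ = (min 1 a)⁻¹ := by
  rcases le_total a 1 with h | h
  · rw [min_eq_right h, max_eq_right (one_le_inv_iff₀.2 ⟨ha, h⟩)]
  · rw [min_eq_left h, max_eq_left (inv_le_one_of_one_le₀ h), inv_one]

end LinearOrderedField

theorem exists_add_rpow_inv_eq_mul_one_sub_rpow_add {a ρ n x : ℝ} (ha : 0 < a) (hρ : 0 ≤ ρ)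
    (hn : 0 ≤ n) (hx : 0 < x) (heq : x ^ a * (x - ρ) = n * x) :
    ∃ r, 0 ≤ r ∧ r ≤ 1 ∧ ρ + n ^ a⁻¹ = x * (1 - r ^ a + r) := by
  set u := n ^ a⁻¹
  have hu : 0 ≤ u := rpow_nonneg hn _
  have hxa : 0 < x ^ a := rpow_pos_of_pos hx a
  have hra : (u / x) ^ a = n / x ^ a := by
    rw [div_rpow hu hx.le, rpow_inv_rpow hn ha.ne']
  have hsub : x - ρ = x * (u / x) ^ a := by
    rw [hra]
    field_simp
    linarith
  refine ⟨u / x, by positivity, ?_, ?_⟩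
  · have : (u / x) ^ a ≤ 1 ^ a := by
      rw [one_rpow]
      nlinarith
    exact (rpow_le_rpow_iff (by positivity) zero_le_one ha).1 this
  · rw [mul_add, mul_sub, ← hsub, mul_div_cancel₀ u hx.ne']
    ring

theorem inv_rpow_mul_add_rpow_le_rpow {a b x M p : ℝ} (ha : 0 ≤ a) (hb : 0 ≤ b) (hM : 0 < M)
    (hp : 1 ≤ p) (h : a + b ≤ M * x) : M⁻¹ ^ p * (a ^ p + b ^ p) ≤ x ^ p := by
  have hMx : M⁻¹ * (a + b) ≤ x := by
    rwa [inv_mul_le_iff₀ hM]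
  calc M⁻¹ ^ p * (a ^ p + b ^ p) ≤ M⁻¹ ^ p * (a + b) ^ p := by
        gcongr
        exact add_rpow_le_rpow_add ha hb hp
    _ = (M⁻¹ * (a + b)) ^ p := (mul_rpow (by positivity) (by positivity)).symm
    _ ≤ x ^ p := by gcongr

theorem rpow_le_two_mul_inv_rpow_mul_add_rpow {a b x m p : ℝ} (ha : 0 ≤ a) (hb : 0 ≤ b)
    (hx : 0 ≤ x) (hm : 0 < m) (hp : 0 ≤ p) (h : m * x ≤ a + b) :
    x ^ p ≤ (2 * m⁻¹) ^ p * (a ^ p + b ^ p) := by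
  have hxm : x ≤ m⁻¹ * (a + b) := by
    rwa [le_inv_mul_iff₀ hm]
  calc x ^ p ≤ (m⁻¹ * (a + b)) ^ p := by gcongr
    _ = m⁻¹ ^ p * (a + b) ^ p := mul_rpow (by positivity) (by positivity)
    _ ≤ m⁻¹ ^ p * (2 ^ p * (a ^ p + b ^ p)) := by
        gcongr
        exact add_rpow_le_two_rpow_mul_add_rpow ha hb hp
    _ = (2 * m⁻¹) ^ p * (a ^ p + b ^ p) := by
        rw [mul_rpow zero_le_two (by positivity)]
        ring

theorem biFluid_pressure_bounds_general
    (gp gm ρ n x : ℝ) (hgp : 1 ≤ gp) (hgm : 0 < gm)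
    (hρ : 0 ≤ ρ) (hn : 0 ≤ n)
    (hx : 0 < x) (heq : x ^ (gp / gm) * (x - ρ) = n * x) :
    (min 1 (gm / gp)) ^ gp * (ρ ^ gp + n ^ gm) ≤ x ^ gp ∧
      x ^ gp ≤ (2 * max 1 (gm / gp)) ^ gp * (ρ ^ gp + n ^ gm) := by
  have ha : 0 < gp / gm := by positivity
  obtain ⟨r, hr₀, hr₁, hsum⟩ := exists_add_rpow_inv_eq_mul_one_sub_rpow_add ha hρ hn hx heq
  have hu : 0 ≤ n ^ (gp / gm)⁻¹ := rpow_nonneg hn _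
  have hun : (n ^ (gp / gm)⁻¹) ^ gp = n ^ gm := by
    rw [← rpow_mul hn, inv_div, div_mul_cancel₀ _ (by positivity)]
  rw [← inv_div, min_one_inv_eq_inv_max_one ha, max_one_inv_eq_inv_min_one ha, ← hun]
  constructor
  · refine inv_rpow_mul_add_rpow_le_rpow hρ hu (by positivity) hgp ?_
    rw [hsum, mul_comm]
    gcongr
    exact one_sub_rpow_add_le_max_one ha.le hr₀ hr₁
  · refine rpow_le_two_mul_inv_rpow_mul_add_rpow hρ hu hx.le (by positivity) (by linarith) ?_
    rw [hsum, mul_comm]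
    gcongr
    exact min_one_le_one_sub_rpow_add ha.le hr₀ hr₁

/-- Bounds for the bi-fluid pressure `P(ρ,n) = ρ₊(ρ,n)^γ⁺`:
`q̲^γ⁺·(ρ^γ⁺ + n^γ⁻) ≤ P ≤ (2q̄)^γ⁺·(ρ^γ⁺ + n^γ⁻)`. -/
theorem biFluid_pressure_bounds
    (gp gm ρ n x : ℝ) (hgp : 1 ≤ gp) (hgm : 0 < gm)
    (hρ : 0 ≤ ρ) (hn : 0 ≤ n) (hsum : 0 < ρ + n)
    (hx : 0 < x) (heq : x ^ (gp / gm) * (x - ρ) = n * x) :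
    (min 1 (gm / gp)) ^ gp * (ρ ^ gp + n ^ gm) ≤ x ^ gp ∧
      x ^ gp ≤ (2 * max 1 (gm / gp)) ^ gp * (ρ ^ gp + n ^ gm) :=
  biFluid_pressure_bounds_general gp gm ρ n x hgp hgm hρ hn hx heq
end

section
/- Let γ⁺, γ⁻ > 0, let n > 0, and let 0 ≤ ρ₁ ≤ ρ₂. Suppose x₁ > 0 satisfies x₁^(γ⁺/γ⁻)·(x₁ − ρ₁) = n·x₁ and x₂ > 0 satisfies x₂^(γ⁺/γ⁻)·(x₂ − ρ₂) = n·x₂. Then min{1, γ⁻/γ⁺}·(ρ₂ − ρ₁) ≤ x₂ − x₁ ≤ max{1, γ⁻/γ⁺}·(ρ₂ − ρ₁). In particular the dominant density is nondecreasing and Lipschitz in ρ for fixed n. -/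
/-!
Writing `α = γ⁺/γ⁻`, the defining equation says exactly that `ρ = x - n x^(1-α)`, so `ρ₊(·, n)`
is the inverse of `g(x) = x - n x^(1-α)`. With `t = n / x^α` we have `g'(x) = 1 + t (α - 1)`,
and `ρ ≥ 0` forces `t ≤ 1`, so `g'` lies between `1` and `α`. By the mean value theorem
`ρ₂ - ρ₁ = c (x₂ - x₁)` for some `c` between `1` and `α`, and `c⁻¹` lies between `1` and `α⁻¹`.
-/

open Set
open scoped Interval

lemma exists_sub_eq_mul_sub_of_hasDerivAt {f f' : ℝ → ℝ} {s : Set ℝ} {a b : ℝ}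
    (hf : ∀ x ∈ [[a, b]], HasDerivAt f (f' x) x) (hs : ∀ x ∈ [[a, b]], f' x ∈ s) :
    ∃ c ∈ s, f b - f a = c * (b - a) := by
  wlog hab : a ≤ b generalizing a b
  · obtain ⟨c, hc, hfc⟩ := this (uIcc_comm a b ▸ hf) (uIcc_comm a b ▸ hs) (le_of_not_ge hab)
    exact ⟨c, hc, by linarith⟩
  rcases hab.eq_or_lt with rfl | hlt
  · exact ⟨f' a, hs a left_mem_uIcc, by ring⟩
  rw [uIcc_of_le hab] at hf hs
  obtain ⟨ξ, hξ, hslope⟩ := exists_hasDerivAt_eq_slope f f' hlt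
    (fun x hx => (hf x hx).continuousAt.continuousWithinAt)
    (fun x hx => hf x (Ioo_subset_Icc_self hx))
  refine ⟨f' ξ, hs ξ (Ioo_subset_Icc_self hξ), ?_⟩
  rw [hslope, div_mul_cancel₀ _ (sub_ne_zero.mpr hlt.ne')]

lemma inv_mem_uIcc_one_inv {α c : ℝ} (hα : 0 < α) (hc : c ∈ [[1, α]]) : c⁻¹ ∈ [[1, α⁻¹]] := by
  rcases le_total 1 α with h | h
  · rw [uIcc_of_le h] at hc
    rw [uIcc_of_ge (inv_le_one_of_one_le₀ h)]
    exact ⟨inv_anti₀ (by linarith [hc.1]) hc.2, inv_le_one_of_one_le₀ hc.1⟩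
  · rw [uIcc_of_ge h] at hc
    rw [uIcc_of_le ((one_le_inv₀ hα).mpr h)]
    exact ⟨(one_le_inv₀ (hα.trans_le hc.1)).mpr hc.2, inv_anti₀ hα hc.1⟩

lemma le_rpow_of_mem_uIcc {α n x a b : ℝ} (hα : 0 < α) (ha : 0 < a) (hb : 0 < b)
    (hna : n ≤ a ^ α) (hnb : n ≤ b ^ α) (hx : x ∈ [[a, b]]) : n ≤ x ^ α := by
  have hmin : min a b ≤ x := hx.1
  rcases min_choice a b with h | h <;> rw [h] at hmin
  · exact hna.trans (Real.rpow_le_rpow ha.le hmin hα.le)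
  · exact hnb.trans (Real.rpow_le_rpow hb.le hmin hα.le)

namespace BiFluid

/-- The inverse of the dominant density `ρ₊(·, n)`, with `α = γ⁺/γ⁻`. -/
noncomputable def rhoOfDominant (α n x : ℝ) : ℝ := x - n * x ^ (1 - α)

variable {α n ρ x : ℝ}

lemma hasDerivAt_rhoOfDominant (hx : 0 < x) :
    HasDerivAt (rhoOfDominant α n) (1 + n / x ^ α * (α - 1)) x := by
  refine ((hasDerivAt_id' x).sub
    ((Real.hasDerivAt_rpow_const (p := 1 - α) (Or.inl hx.ne')).const_mul n)).congr_deriv ?_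
  rw [show 1 - α - 1 = -α by ring, Real.rpow_neg hx.le]
  ring

lemma one_add_div_rpow_mul_mem_uIcc (hn : 0 ≤ n) (hx : 0 < x) (hnx : n ≤ x ^ α) :
    1 + n / x ^ α * (α - 1) ∈ [[1, α]] :=
  (convex_uIcc 1 α).add_smul_sub_mem left_mem_uIcc right_mem_uIcc
    ⟨by positivity, div_le_one_of_le₀ hnx (by positivity)⟩

lemma eq_rhoOfDominant (hx : 0 < x) (heq : x ^ α * (x - ρ) = n * x) :
    ρ = rhoOfDominant α n x := by
  have hxα : 0 < x ^ α := by positivity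
  rw [rhoOfDominant, Real.rpow_sub hx, Real.rpow_one]
  field_simp
  linear_combination -heq

lemma le_rpow_of_rpow_mul_sub_eq (hρ : 0 ≤ ρ) (hx : 0 < x) (heq : x ^ α * (x - ρ) = n * x) :
    n ≤ x ^ α := by
  have hxα : 0 < x ^ α := by positivity
  nlinarith

lemma exists_rhoOfDominant_sub_eq_mul_sub {a b : ℝ} (hα : 0 < α) (hn : 0 ≤ n)
    (ha : 0 < a) (hb : 0 < b) (hna : n ≤ a ^ α) (hnb : n ≤ b ^ α) :
    ∃ c ∈ [[1, α]], rhoOfDominant α n b - rhoOfDominant α n a = c * (b - a) := by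
  have hpos : ∀ x ∈ [[a, b]], 0 < x := fun x hx => (lt_min ha hb).trans_le hx.1
  exact exists_sub_eq_mul_sub_of_hasDerivAt
    (fun x hx => hasDerivAt_rhoOfDominant (hpos x hx))
    (fun x hx => one_add_div_rpow_mul_mem_uIcc hn (hpos x hx)
      (le_rpow_of_mem_uIcc hα ha hb hna hnb hx))

end BiFluid

open BiFluid

/-- Integrated form of `min{1,γ⁻/γ⁺} ≤ ∂ρ ρ₊ ≤ max{1,γ⁻/γ⁺}`: the dominant density
is nondecreasing and Lipschitz in ρ for fixed n. -/
theorem biFluid_dominant_density_lipschitz_in_rho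
    (gp gm n ρ₁ ρ₂ x₁ x₂ : ℝ) (hgp : 0 < gp) (hgm : 0 < gm)
    (hn : 0 < n) (hρ₁ : 0 ≤ ρ₁) (hρ : ρ₁ ≤ ρ₂)
    (hx₁ : 0 < x₁) (heq₁ : x₁ ^ (gp / gm) * (x₁ - ρ₁) = n * x₁)
    (hx₂ : 0 < x₂) (heq₂ : x₂ ^ (gp / gm) * (x₂ - ρ₂) = n * x₂) :
    min 1 (gm / gp) * (ρ₂ - ρ₁) ≤ x₂ - x₁ ∧
      x₂ - x₁ ≤ max 1 (gm / gp) * (ρ₂ - ρ₁) := by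
  have hα : 0 < gp / gm := div_pos hgp hgm
  obtain ⟨c, hc, hslope⟩ := exists_rhoOfDominant_sub_eq_mul_sub hα hn.le hx₁ hx₂
    (le_rpow_of_rpow_mul_sub_eq hρ₁ hx₁ heq₁)
    (le_rpow_of_rpow_mul_sub_eq (hρ₁.trans hρ) hx₂ heq₂)
  rw [← eq_rhoOfDominant hx₁ heq₁, ← eq_rhoOfDominant hx₂ heq₂] at hslope
  have hc₀ : 0 < c := (lt_min one_pos hα).trans_le hc.1
  have hinv : c⁻¹ ∈ [[1, gm / gp]] := inv_div gp gm ▸ inv_mem_uIcc_one_inv hα hc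
  have hx : x₂ - x₁ = c⁻¹ * (ρ₂ - ρ₁) := by
    rw [hslope, inv_mul_cancel_left₀ hc₀.ne']
  have hd : 0 ≤ ρ₂ - ρ₁ := sub_nonneg.mpr hρ
  rw [hx]
  exact ⟨mul_le_mul_of_nonneg_right hinv.1 hd, mul_le_mul_of_nonneg_right hinv.2 hd⟩
end

section
/- Let γ⁺, γ⁻ > 0, let ρ > 0, and let 0 < n₁ ≤ n₂. Suppose x₁ > 0 satisfies x₁^(γ⁺/γ⁻)·(x₁ − ρ) = n₁·x₁ and x₂ > 0 satisfies x₂^(γ⁺/γ⁻)·(x₂ − ρ) = n₂·x₂. Then min{1, γ⁺/γ⁻}·(n₂ − n₁) ≤ x₂^(γ⁺/γ⁻) − x₁^(γ⁺/γ⁻) ≤ max{1, γ⁺/γ⁻}·(n₂ − n₁); in particular x₁ ≤ x₂. -/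
open Real Set

private lemma biFluid_hasDerivAt (c d α x : ℝ) (hx : 0 < x) :
    HasDerivAt (fun y : ℝ => c * y ^ α + d * y ^ (α - 1))
      (c * (α * x ^ (α - 1)) + d * ((α - 1) * x ^ (α - 1 - 1))) x :=
  ((Real.hasDerivAt_rpow_const (p := α) (Or.inl hx.ne')).const_mul c).add
    ((Real.hasDerivAt_rpow_const (p := α - 1) (Or.inl hx.ne')).const_mul d)

private lemma biFluid_mono (c d α ρ : ℝ) (hρ : 0 < ρ)
    (hd : ∀ x, ρ < x → 0 ≤ c * (α * x ^ (α - 1)) + d * ((α - 1) * x ^ (α - 1 - 1))) :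
    MonotoneOn (fun y : ℝ => c * y ^ α + d * y ^ (α - 1)) (Ici ρ) := by
  have hcont : ContinuousOn (fun y : ℝ => c * y ^ α + d * y ^ (α - 1)) (Ici ρ) :=
    fun x hx => (biFluid_hasDerivAt c d α x (hρ.trans_le hx)).continuousAt.continuousWithinAt
  have hint : interior (Ici ρ) = Ioi ρ := interior_Ici
  refine monotoneOn_of_deriv_nonneg (convex_Ici ρ) hcont ?_ ?_
  · rw [hint]
    exact fun x hx => (biFluid_hasDerivAt c d α x (hρ.trans hx)).differentiableAt.differentiableWithinAt
  · rw [hint]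
    intro x hx
    rw [(biFluid_hasDerivAt c d α x (hρ.trans hx)).deriv]
    exact hd x hx

private lemma biFluid_strictMono (α ρ : ℝ) (hα : 0 < α) (hρ : 0 < ρ) :
    StrictMonoOn (fun y : ℝ => 1 * y ^ α + (-ρ) * y ^ (α - 1)) (Ici ρ) := by
  have hcont : ContinuousOn (fun y : ℝ => 1 * y ^ α + (-ρ) * y ^ (α - 1)) (Ici ρ) :=
    fun x hx => (biFluid_hasDerivAt 1 (-ρ) α x (hρ.trans_le hx)).continuousAt.continuousWithinAt
  refine strictMonoOn_of_deriv_pos (convex_Ici ρ) hcont ?_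
  rw [interior_Ici]
  intro x hx
  have hxpos : 0 < x := hρ.trans hx
  rw [(biFluid_hasDerivAt 1 (-ρ) α x hxpos).deriv]
  have h1 : x ^ (α - 1) = x ^ (α - 1 - 1) * x := by
    rw [← Real.rpow_add_one hxpos.ne' (α - 1 - 1)]; ring_nf
  have h2 : (0:ℝ) < x ^ (α - 1 - 1) := Real.rpow_pos_of_pos hxpos _
  rw [h1]
  have : α * (x - ρ) > 0 := mul_pos hα (by linarith [hx.out])
  nlinarith [mul_pos h2 (show (0:ℝ) < α * (x - ρ) + ρ by linarith)]

/-- Integrated form of `min{1,γ⁺/γ⁻} ≤ ∂ₙ ρ₋ ≤ max{1,γ⁺/γ⁻}` for the secondary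
density `ρ₋ = ρ₊^(γ⁺/γ⁻)`; in particular `x₁ ≤ x₂`. -/
theorem biFluid_secondary_density_lipschitz_in_n
    (gp gm ρ n₁ n₂ x₁ x₂ : ℝ) (hgp : 0 < gp) (hgm : 0 < gm)
    (hρ : 0 < ρ) (hn₁ : 0 < n₁) (hn : n₁ ≤ n₂)
    (hx₁ : 0 < x₁) (heq₁ : x₁ ^ (gp / gm) * (x₁ - ρ) = n₁ * x₁)
    (hx₂ : 0 < x₂) (heq₂ : x₂ ^ (gp / gm) * (x₂ - ρ) = n₂ * x₂) :
    (min 1 (gp / gm) * (n₂ - n₁) ≤ x₂ ^ (gp / gm) - x₁ ^ (gp / gm) ∧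
      x₂ ^ (gp / gm) - x₁ ^ (gp / gm) ≤ max 1 (gp / gm) * (n₂ - n₁)) ∧
      x₁ ≤ x₂ := by
  set α := gp / gm with hαdef
  have hα : 0 < α := div_pos hgp hgm
  have hn₂ : 0 < n₂ := hn₁.trans_le hn
  have hP₁ : (0:ℝ) < x₁ ^ α := Real.rpow_pos_of_pos hx₁ α
  have hP₂ : (0:ℝ) < x₂ ^ α := Real.rpow_pos_of_pos hx₂ α
  -- x_i > ρ
  have hρx₁ : ρ < x₁ := by nlinarith [mul_pos hn₁ hx₁]
  have hρx₂ : ρ < x₂ := by nlinarith [mul_pos hn₂ hx₂]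
  -- n_i = x_i^α - ρ x_i^(α-1)
  have hsub₁ : x₁ ^ (α - 1) = x₁ ^ α / x₁ := Real.rpow_sub_one hx₁.ne' α
  have hsub₂ : x₂ ^ (α - 1) = x₂ ^ α / x₂ := Real.rpow_sub_one hx₂.ne' α
  have key₁ : x₁ ^ α - ρ * x₁ ^ (α - 1) = n₁ := by
    rw [hsub₁]; field_simp; nlinarith [heq₁]
  have key₂ : x₂ ^ α - ρ * x₂ ^ (α - 1) = n₂ := by
    rw [hsub₂]; field_simp; nlinarith [heq₂]
  -- x₁ ≤ x₂ by strict monotonicity of n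
  have hx₁₂ : x₁ ≤ x₂ := by
    by_contra hcon
    push_neg at hcon
    have := biFluid_strictMono α ρ hα hρ (mem_Ici.mpr hρx₂.le) (mem_Ici.mpr hρx₁.le) hcon
    simp only at this
    nlinarith
  refine ⟨⟨?_, ?_⟩, hx₁₂⟩
  · -- lower bound
    rcases le_total 1 α with h1α | hα1
    · -- α ≥ 1 : min = 1, need B ≥ 0
      rw [min_eq_left h1α]
      have hB : x₁ ^ (α - 1) ≤ x₂ ^ (α - 1) :=
        Real.rpow_le_rpow hx₁.le hx₁₂ (by linarith)
      nlinarith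
    · -- α ≤ 1 : min = α, use h antitone
      rw [min_eq_right hα1]
      have hmono := biFluid_mono (1 - α) (α * ρ) α ρ hρ (fun x hx => by
        have hxpos : 0 < x := hρ.trans hx
        have h1 : x ^ (α - 1) = x ^ (α - 1 - 1) * x := by
          rw [← Real.rpow_add_one hxpos.ne' (α - 1 - 1)]; ring_nf
        have h2 : (0:ℝ) < x ^ (α - 1 - 1) := Real.rpow_pos_of_pos hxpos _
        rw [h1]
        have h3 : 0 ≤ (1 - α) * α * (x - ρ) :=
          mul_nonneg (mul_nonneg (by linarith : (0:ℝ) ≤ 1 - α) hα.le)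
            (by linarith : (0:ℝ) ≤ x - ρ)
        linarith [mul_nonneg h3 h2.le]) (mem_Ici.mpr hρx₁.le) (mem_Ici.mpr hρx₂.le) hx₁₂
      simp only at hmono
      rw [← key₁, ← key₂]
      linarith
  · -- upper bound
    rcases le_total 1 α with h1α | hα1
    · -- α ≥ 1 : max = α, use h monotone
      rw [max_eq_right h1α]
      have hmono := biFluid_mono (α - 1) (-(α * ρ)) α ρ hρ (fun x hx => by
        have hxpos : 0 < x := hρ.trans hx
        have h1 : x ^ (α - 1) = x ^ (α - 1 - 1) * x := by
          rw [← Real.rpow_add_one hxpos.ne' (α - 1 - 1)]; ring_nf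
        have h2 : (0:ℝ) < x ^ (α - 1 - 1) := Real.rpow_pos_of_pos hxpos _
        rw [h1]
        have h3 : 0 ≤ (α - 1) * α * (x - ρ) :=
          mul_nonneg (mul_nonneg (by linarith : (0:ℝ) ≤ α - 1) hα.le)
            (by linarith : (0:ℝ) ≤ x - ρ)
        linarith [mul_nonneg h3 h2.le]) (mem_Ici.mpr hρx₁.le) (mem_Ici.mpr hρx₂.le) hx₁₂
      simp only at hmono
      rw [← key₁, ← key₂]
      linarith
    · -- α ≤ 1 : max = 1, need B ≤ 0
      rw [max_eq_left hα1]
      have hB : x₂ ^ (α - 1) ≤ x₁ ^ (α - 1) :=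
        Real.rpow_le_rpow_of_nonpos hx₁ hx₁₂ (by linarith)
      nlinarith
end

section
/- Let γ⁺, γ⁻ > 0, let n > 0 and ρ₀ > 0, and let x : ℝ → ℝ be a function such that for every ρ in some neighborhood of ρ₀ one has x(ρ) > 0 and x(ρ)^(γ⁺/γ⁻)·(x(ρ) − ρ) = n·x(ρ). Set x₀ := x(ρ₀). Then x is differentiable at ρ₀ with derivative x₀ / (ρ₀ + (γ⁺/γ⁻)·(x₀ − ρ₀)), and this derivative lies in the interval [min{1, γ⁻/γ⁺}, max{1, γ⁻/γ⁺}]. -/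
set_option maxHeartbeats 1000000 in
/-- Implicit differentiation of the dominant density in ρ:
`∂ρ ρ₊ = ρ₊ / (ρ + (γ⁺/γ⁻)(ρ₊ − ρ))`, and this lies in `[min{1,γ⁻/γ⁺}, max{1,γ⁻/γ⁺}]`. -/
theorem biFluid_dominant_density_hasDerivAt_rho
    (gp gm n ρ₀ : ℝ) (hgp : 0 < gp) (hgm : 0 < gm)
    (hn : 0 < n) (hρ₀ : 0 < ρ₀) (x : ℝ → ℝ)
    (hx : ∀ᶠ ρ in nhds ρ₀, 0 < x ρ ∧ x ρ ^ (gp / gm) * (x ρ - ρ) = n * x ρ) :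
    HasDerivAt x (x ρ₀ / (ρ₀ + (gp / gm) * (x ρ₀ - ρ₀))) ρ₀ ∧
      x ρ₀ / (ρ₀ + (gp / gm) * (x ρ₀ - ρ₀)) ∈
        Set.Icc (min 1 (gm / gp)) (max 1 (gm / gp)) := by
  have hα : 0 < gp / gm := div_pos hgp hgm
  set α := gp / gm with hαdef
  obtain ⟨hx0pos, hx0eq⟩ := hx.self_of_nhds
  set y₀ := x ρ₀ with hy₀def
  -- From the defining equation, derive `n * y ^ (1 - α) = y - ρ`.
  have key : ∀ ρ y : ℝ, 0 < y → y ^ α * (y - ρ) = n * y → n * y ^ (1 - α) = y - ρ := by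
    intro ρ y hy heq
    have hya : (0:ℝ) < y ^ α := Real.rpow_pos_of_pos hy α
    have h1 : y ^ (1 - α) * y ^ α = y := by
      rw [← Real.rpow_add hy, sub_add_cancel, Real.rpow_one]
    have h2 : (n * y ^ (1 - α)) * y ^ α = (y - ρ) * y ^ α := by
      rw [mul_assoc, h1]; linarith [heq]
    exact mul_right_cancel₀ (ne_of_gt hya) h2
  have hk₀ : n * y₀ ^ (1 - α) = y₀ - ρ₀ := key ρ₀ y₀ hx0pos hx0eq
  have hy₀ρ : ρ₀ < y₀ := by
    have h := Real.rpow_pos_of_pos hx0pos (1 - α)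
    nlinarith
  -- splitting rpow
  have split : ∀ y : ℝ, 0 < y → y ^ (1 - α) = y * (y ^ α)⁻¹ := by
    intro y hy
    rw [show (1 : ℝ) - α = 1 + (-α) by ring, Real.rpow_add hy, Real.rpow_one,
      Real.rpow_neg hy.le]
  -- uniqueness of the positive root
  have aux : ∀ ρ : ℝ, 0 < ρ → ∀ y₁ y₂ : ℝ, 0 < y₁ → 0 < y₂ →
      n * y₁ ^ (1 - α) = y₁ - ρ → n * y₂ ^ (1 - α) = y₂ - ρ → y₁ < y₂ → False := by
    intro ρ hρ y₁ y₂ h1 h2 e1 e2 hlt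
    rw [split y₁ h1] at e1
    rw [split y₂ h2] at e2
    have ha1 : (0:ℝ) < (y₁ ^ α)⁻¹ := inv_pos.2 (Real.rpow_pos_of_pos h1 α)
    have ha2 : (0:ℝ) < (y₂ ^ α)⁻¹ := inv_pos.2 (Real.rpow_pos_of_pos h2 α)
    have hplt : y₁ ^ α < y₂ ^ α := Real.rpow_lt_rpow h1.le hlt hα
    have hainv : (y₂ ^ α)⁻¹ < (y₁ ^ α)⁻¹ :=
      (inv_lt_inv₀ (Real.rpow_pos_of_pos h2 α) (Real.rpow_pos_of_pos h1 α)).2 hplt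
    have p1 : y₁ * (1 - n * (y₁ ^ α)⁻¹) = ρ := by nlinarith
    have p2 : y₂ * (1 - n * (y₂ ^ α)⁻¹) = ρ := by nlinarith
    have q1 : 0 < 1 - n * (y₁ ^ α)⁻¹ := by nlinarith
    nlinarith [mul_pos (sub_pos.2 hlt) q1, mul_pos h2 (by nlinarith :
      (0:ℝ) < n * (y₁ ^ α)⁻¹ - n * (y₂ ^ α)⁻¹)]
  have uniq : ∀ ρ : ℝ, 0 < ρ → ∀ y₁ y₂ : ℝ, 0 < y₁ → 0 < y₂ →
      n * y₁ ^ (1 - α) = y₁ - ρ → n * y₂ ^ (1 - α) = y₂ - ρ → y₁ = y₂ := by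
    intro ρ hρ y₁ y₂ h1 h2 e1 e2
    rcases lt_trichotomy y₁ y₂ with h | h | h
    · exact absurd (aux ρ hρ y₁ y₂ h1 h2 e1 e2 h) (fun f => f)
    · exact h
    · exact absurd (aux ρ hρ y₂ y₁ h2 h1 e2 e1 h) (fun f => f)
  -- the function g and its derivative
  set g : ℝ → ℝ := fun y => y - n * y ^ (1 - α) with hgdef
  set cfun : ℝ → ℝ := fun y => 1 - n * ((1 - α) * y ^ (1 - α - 1)) with hcdef
  have hg' : ∀ y : ℝ, 0 < y → HasDerivAt g (cfun y) y := by
    intro y hy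
    exact (hasDerivAt_id y).sub ((Real.hasDerivAt_rpow_const (Or.inl hy.ne')).const_mul n)
  have hsub : y₀ ^ (1 - α - 1) = y₀ ^ (1 - α) / y₀ := by
    rw [Real.rpow_sub hx0pos, Real.rpow_one]
  have hD : 0 < ρ₀ + α * (y₀ - ρ₀) := add_pos hρ₀ (mul_pos hα (sub_pos.2 hy₀ρ))
  have hc₀ : cfun y₀ = (ρ₀ + α * (y₀ - ρ₀)) / y₀ := by
    have hny : n * y₀ ^ (1 - α - 1) = (y₀ - ρ₀) / y₀ := by
      rw [hsub, ← mul_div_assoc, hk₀]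
    simp only [hcdef]
    rw [show n * ((1 - α) * y₀ ^ (1 - α - 1)) = (1 - α) * (n * y₀ ^ (1 - α - 1)) by ring,
      hny]
    field_simp
    ring
  have hc₀pos : 0 < cfun y₀ := by rw [hc₀]; exact div_pos hD hx0pos
  -- neighborhood where y > 0 and cfun y > 0
  have hccont : ContinuousAt cfun y₀ := by
    have : ContinuousAt (fun y : ℝ => y ^ (1 - α - 1)) y₀ :=
      Real.continuousAt_rpow_const y₀ (1 - α - 1) (Or.inl hx0pos.ne')
    exact continuousAt_const.sub (((this.const_mul (1 - α)).const_mul n))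
  have hball : ∃ δ₀ > 0, ∀ ⦃y : ℝ⦄, dist y y₀ < δ₀ → 0 < y ∧ 0 < cfun y := by
    rw [← Metric.eventually_nhds_iff]
    filter_upwards [eventually_gt_nhds hx0pos, hccont (Ioi_mem_nhds hc₀pos)] with y h1 h2
    exact ⟨h1, h2⟩
  obtain ⟨δ₀, hδ₀pos, hB⟩ := hball
  -- strict monotonicity of g near y₀
  have hmono : ∀ δ : ℝ, 0 < δ → δ < δ₀ → StrictMonoOn g (Set.Icc (y₀ - δ) (y₀ + δ)) := by
    intro δ hδ hδlt
    have hmem : ∀ y ∈ Set.Icc (y₀ - δ) (y₀ + δ), dist y y₀ < δ₀ := by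
      intro y hy
      rw [Real.dist_eq, abs_lt]
      constructor <;> [linarith [hy.1]; linarith [hy.2]]
    apply strictMonoOn_of_deriv_pos (convex_Icc _ _)
    · intro y hy
      exact ((hg' y (hB (hmem y hy)).1).continuousAt).continuousWithinAt
    · intro y hy
      rw [interior_Icc] at hy
      have hy' := hmem y ⟨hy.1.le, hy.2.le⟩
      rw [(hg' y (hB hy').1).deriv]
      exact (hB hy').2
  have hgy₀ : g y₀ = ρ₀ := by simp only [hgdef]; linarith
  have hcontI : ∀ δ : ℝ, 0 < δ → δ < δ₀ → ContinuousOn g (Set.Icc (y₀ - δ) (y₀ + δ)) := by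
    intro δ hδ hδlt y hy
    have hy0 : 0 < y := by
      have := hB (show dist y y₀ < δ₀ by
        rw [Real.dist_eq, abs_lt]; constructor <;> [linarith [hy.1]; linarith [hy.2]])
      exact this.1
    exact ((hg' y hy0).continuousAt).continuousWithinAt
  -- continuity of x at ρ₀
  have hxc : ContinuousAt x ρ₀ := by
    rw [ContinuousAt, Metric.tendsto_nhds]
    intro ε hε
    set δ := min (δ₀ / 2) (ε / 2) with hδdef
    have hδpos : 0 < δ := lt_min (by linarith) (by linarith)
    have hδlt : δ < δ₀ := lt_of_le_of_lt (min_le_left _ _) (by linarith)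
    have hδε : δ ≤ ε / 2 := min_le_right _ _
    have hsm := hmono δ hδpos hδlt
    have hmemL : y₀ - δ ∈ Set.Icc (y₀ - δ) (y₀ + δ) := ⟨le_refl _, by linarith⟩
    have hmemC : y₀ ∈ Set.Icc (y₀ - δ) (y₀ + δ) := ⟨by linarith, by linarith⟩
    have hmemR : y₀ + δ ∈ Set.Icc (y₀ - δ) (y₀ + δ) := ⟨by linarith, le_refl _⟩
    have hga : g (y₀ - δ) < ρ₀ := by
      have := hsm hmemL hmemC (by linarith)
      rwa [hgy₀] at this
    have hgb : ρ₀ < g (y₀ + δ) := by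
      have := hsm hmemC hmemR (by linarith)
      rwa [hgy₀] at this
    filter_upwards [Ioo_mem_nhds hga hgb, Ioi_mem_nhds hρ₀, hx] with ρ h1 h2 h3
    have hIVT := intermediate_value_Icc (show y₀ - δ ≤ y₀ + δ by linarith)
      (hcontI δ hδpos hδlt)
    obtain ⟨y, hyI, hgy⟩ := hIVT ⟨h1.1.le, h1.2.le⟩
    have hy0 : 0 < y := by
      have := hB (show dist y y₀ < δ₀ by
        rw [Real.dist_eq, abs_lt]; constructor <;> [linarith [hyI.1]; linarith [hyI.2]])
      exact this.1
    have hyeq : n * y ^ (1 - α) = y - ρ := by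
      have : y - n * y ^ (1 - α) = ρ := hgy
      linarith
    have hxρeq : n * (x ρ) ^ (1 - α) = x ρ - ρ := key ρ (x ρ) h3.1 h3.2
    have hxy : x ρ = y := uniq ρ h2 (x ρ) y h3.1 hy0 hxρeq hyeq
    rw [hxy, Real.dist_eq, abs_lt]
    constructor <;> [linarith [hyI.1]; linarith [hyI.2]]
  -- apply the local inverse derivative theorem
  have hlinv : ∀ᶠ ρ in nhds ρ₀, g (x ρ) = ρ := by
    filter_upwards [hx] with ρ hρ
    have := key ρ (x ρ) hρ.1 hρ.2
    simp only [hgdef]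
    linarith
  have hderiv : HasDerivAt x (cfun y₀)⁻¹ ρ₀ :=
    HasDerivAt.of_local_left_inverse hxc (hg' y₀ hx0pos) hc₀pos.ne' hlinv
  have hval : (cfun y₀)⁻¹ = y₀ / (ρ₀ + α * (y₀ - ρ₀)) := by
    rw [hc₀, inv_div]
  have hgm : gm / gp = α⁻¹ := by rw [hαdef, inv_div]
  refine ⟨by rw [← hval]; exact hderiv, ?_⟩
  rw [hgm]
  constructor
  · rcases le_total α 1 with hA | hA
    · refine le_trans (min_le_left _ _) ?_
      rw [le_div_iff₀ hD]
      nlinarith [mul_nonneg (sub_nonneg.2 hA) (sub_pos.2 hy₀ρ).le]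
    · refine le_trans (min_le_right _ _) ?_
      rw [inv_eq_one_div, div_le_div_iff₀ hα hD]
      nlinarith [mul_nonneg (sub_nonneg.2 hA) hρ₀.le]
  · rcases le_total α 1 with hA | hA
    · refine le_trans ?_ (le_max_right _ _)
      rw [inv_eq_one_div, div_le_div_iff₀ hD hα]
      nlinarith [mul_nonneg (sub_nonneg.2 hA) hρ₀.le]
    · refine le_trans ?_ (le_max_left _ _)
      rw [div_le_iff₀ hD]
      nlinarith [mul_nonneg (sub_nonneg.2 hA) (sub_pos.2 hy₀ρ).le]
end

section
/- Let γ⁺, γ⁻ > 0, let ρ > 0 and n₀ > 0, and let y : ℝ → ℝ be a function such that for every n in some neighborhood of n₀ one has y(n) > 0 and y(n)^(γ⁺/γ⁻)·(y(n) − ρ) = n·y(n). Set y₀ := y(n₀). Then y is differentiable at n₀ with derivative y₀^(2 − γ⁺/γ⁻) / (ρ + (γ⁺/γ⁻)·(y₀ − ρ)); this derivative is positive, and there exists a constant C > 0 depending only on γ⁺ and γ⁻ such that it is at most C·(ρ^(1 − γ⁺/γ⁻) + n₀^(γ⁻/γ⁺ − 1)). -/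
/-!
For `x > 0` the equation `x^a (x - ρ) = n x`, `a = γ⁺/γ⁻`, says `F x = n` with
`F x = x^(a-1) (x - ρ)`. On `x > ρ` the map `F` is strictly increasing with derivative
`x^(a-2) (ρ + a (x - ρ)) > 0`, so `y` is the local inverse of `F` near `n₀`, and the inverse
function theorem gives `y'(n₀) = 1 / F'(y₀)`. For the bound, either `y₀ ≤ 2ρ`, and the derivative
is of order `ρ^(1-a)`, or `y₀ > 2ρ`, and then `y₀^a` is comparable to `n₀`, so that
`y₀^(1-a) = (y₀^a)^(1/a - 1)` is of order `n₀^(1/a - 1)`.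
-/

open Filter Topology Set

theorem HasStrictDerivAt.to_local_right_inverse_of_injOn {𝕜 : Type*}
    [NontriviallyNormedField 𝕜] [CompleteSpace 𝕜] {f g : 𝕜 → 𝕜} {f' a : 𝕜} {s : Set 𝕜}
    (hf : HasStrictDerivAt f f' a) (hf' : f' ≠ 0) (hs : s ∈ 𝓝 a) (hinj : s.InjOn f)
    (hg : ∀ᶠ y in 𝓝 (f a), g y ∈ s ∧ f (g y) = y) : HasStrictDerivAt g f'⁻¹ (f a) := by
  refine hf.to_local_left_inverse hf' ?_
  filter_upwards [hs, hf.hasDerivAt.continuousAt.eventually hg] with x hx ⟨hgx, hfgx⟩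
  exact hinj hgx hx hfgx

theorem Real.rpow_le_rpow_add_one_mul {b c x : ℝ} (hb : 0 < b) (hc : 0 ≤ c) (hbx : b ≤ x)
    (hxc : x ≤ c * b) (p : ℝ) : x ^ p ≤ (c ^ p + 1) * b ^ p := by
  have hbp : 0 < b ^ p := Real.rpow_pos_of_pos hb p
  rcases le_total 0 p with hp | hp
  · calc x ^ p ≤ (c * b) ^ p := Real.rpow_le_rpow (hb.le.trans hbx) hxc hp
      _ = c ^ p * b ^ p := Real.mul_rpow hc hb.le
      _ ≤ (c ^ p + 1) * b ^ p := by nlinarith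
  · calc x ^ p ≤ b ^ p := Real.rpow_le_rpow_of_nonpos hb hbx hp
      _ ≤ (c ^ p + 1) * b ^ p := by nlinarith [Real.rpow_nonneg hc p]

namespace DominantDensity

/-- Dividing `x^a (x - ρ) = n x` by `x` puts the defining equation of `ρ₊` in the form
`dominantDensityMap a ρ ρ₊ = n`. -/
noncomputable def dominantDensityMap (a ρ x : ℝ) : ℝ := x ^ (a - 1) * (x - ρ)

variable {a ρ n x : ℝ}

theorem lt_and_map_eq_of_rpow_mul_sub_eq (hn : 0 < n) (hx : 0 < x)
    (h : x ^ a * (x - ρ) = n * x) : ρ < x ∧ dominantDensityMap a ρ x = n := by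
  have hxa : 0 < x ^ a := Real.rpow_pos_of_pos hx a
  refine ⟨by nlinarith [mul_pos hn hx], ?_⟩
  rw [dominantDensityMap, Real.rpow_sub_one hx.ne', div_mul_eq_mul_div, h,
    mul_div_cancel_right₀ _ hx.ne']

theorem hasStrictDerivAt_dominantDensityMap (hx : 0 < x) :
    HasStrictDerivAt (dominantDensityMap a ρ) (x ^ (a - 2) * (ρ + a * (x - ρ))) x := by
  have h := (Real.hasStrictDerivAt_rpow_const_of_ne hx.ne' (a - 1)).mul
    ((hasStrictDerivAt_id x).sub_const ρ)
  refine (h : HasStrictDerivAt (dominantDensityMap a ρ) _ x).congr_deriv ?_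
  rw [id_eq, sub_sub, one_add_one_eq_two, Real.rpow_sub_one hx.ne' a, Real.rpow_sub hx,
    Real.rpow_two]
  field_simp
  ring

theorem strictMonoOn_dominantDensityMap (ha : 0 ≤ a) (hρ : 0 < ρ) :
    StrictMonoOn (dominantDensityMap a ρ) (Ioi ρ) := by
  have hderiv : ∀ x ∈ Ioi ρ, HasStrictDerivAt (dominantDensityMap a ρ)
      (x ^ (a - 2) * (ρ + a * (x - ρ))) x :=
    fun x hx => hasStrictDerivAt_dominantDensityMap (hρ.trans hx)
  refine strictMonoOn_of_deriv_pos (convex_Ioi ρ)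
    (fun x hx => (hderiv x hx).hasDerivAt.continuousAt.continuousWithinAt) fun x hx => ?_
  rw [interior_Ioi] at hx
  rw [(hderiv x hx).hasDerivAt.deriv]
  have : 0 < ρ + a * (x - ρ) := by nlinarith [mem_Ioi.1 hx]
  exact mul_pos (Real.rpow_pos_of_pos (hρ.trans hx) _) this

theorem hasDerivAt_of_eventually_map_eq {y : ℝ → ℝ} (ha : 0 ≤ a) (hρ : 0 < ρ)
    (hy : ∀ᶠ m in 𝓝 n, ρ < y m ∧ dominantDensityMap a ρ (y m) = m) :
    HasDerivAt y (y n ^ (2 - a) / (ρ + a * (y n - ρ))) n := by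
  obtain ⟨hρy, hmap⟩ := hy.self_of_nhds
  have hy₀ : 0 < y n := hρ.trans hρy
  have hden : 0 < ρ + a * (y n - ρ) := by nlinarith
  have h := (hasStrictDerivAt_dominantDensityMap (a := a) hy₀).to_local_right_inverse_of_injOn
    (mul_pos (Real.rpow_pos_of_pos hy₀ _) hden).ne' (Ioi_mem_nhds hρy)
    (strictMonoOn_dominantDensityMap ha hρ).injOn (by rwa [hmap])
  rw [hmap, mul_inv, ← Real.rpow_neg hy₀.le, neg_sub, ← div_eq_mul_inv] at h
  exact h.hasDerivAt

theorem div_le_of_le_two_mul (ha : 0 ≤ a) (hρ : 0 < ρ) (hρx : ρ ≤ x) (hx : x ≤ 2 * ρ) :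
    x ^ (2 - a) / (ρ + a * (x - ρ)) ≤ (2 ^ (2 - a) + 1) * ρ ^ (1 - a) := by
  have hxp : 0 < x ^ (2 - a) := Real.rpow_pos_of_pos (hρ.trans_le hρx) _
  calc x ^ (2 - a) / (ρ + a * (x - ρ)) ≤ x ^ (2 - a) / ρ :=
        div_le_div_of_nonneg_left hxp.le hρ (by nlinarith)
    _ ≤ (2 ^ (2 - a) + 1) * ρ ^ (2 - a) / ρ := by
        gcongr
        exact Real.rpow_le_rpow_add_one_mul hρ zero_le_two hρx hx _
    _ = (2 ^ (2 - a) + 1) * ρ ^ (1 - a) := by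
        rw [show 2 - a = (1 - a) + 1 by ring, Real.rpow_add_one hρ.ne']
        field_simp

theorem div_le_of_two_mul_le (ha : 0 < a) (hρ : 0 < ρ) (hx : 2 * ρ ≤ x)
    (hmap : dominantDensityMap a ρ x = n) :
    x ^ (2 - a) / (ρ + a * (x - ρ)) ≤ 2 / a * (2 ^ (1 / a - 1) + 1) * n ^ (1 / a - 1) := by
  have hx₀ : 0 < x := by linarith
  have hxa1 : 0 < x ^ (a - 1) := Real.rpow_pos_of_pos hx₀ _
  have hxa : x ^ a = x ^ (a - 1) * x := by
    rw [Real.rpow_sub_one hx₀.ne', div_mul_cancel₀ _ hx₀.ne']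
  rw [dominantDensityMap] at hmap
  -- `x^a = n x / (x - ρ)` and `x / (x - ρ) ∈ [1, 2]`
  have hn : 0 < n := by rw [← hmap]; exact mul_pos hxa1 (by linarith)
  have hn_le : n ≤ x ^ a := by rw [hxa, ← hmap]; nlinarith
  have hle_n : x ^ a ≤ 2 * n := by rw [hxa, ← hmap]; nlinarith
  calc x ^ (2 - a) / (ρ + a * (x - ρ)) ≤ x ^ (2 - a) / (a * x / 2) :=
        div_le_div_of_nonneg_left (Real.rpow_nonneg hx₀.le _) (by positivity) (by nlinarith)
    _ = 2 / a * (x ^ a) ^ (1 / a - 1) := by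
        rw [← Real.rpow_mul hx₀.le, show a * (1 / a - 1) = 1 - a by field_simp,
          show 2 - a = (1 - a) + 1 by ring, Real.rpow_add_one hx₀.ne']
        field_simp
    _ ≤ 2 / a * ((2 ^ (1 / a - 1) + 1) * n ^ (1 / a - 1)) := by
        gcongr
        exact Real.rpow_le_rpow_add_one_mul hn zero_le_two hn_le hle_n _
    _ = 2 / a * (2 ^ (1 / a - 1) + 1) * n ^ (1 / a - 1) := by ring

theorem div_le_of_map_eq (ha : 0 < a) (hρ : 0 < ρ) (hρx : ρ < x)
    (hmap : dominantDensityMap a ρ x = n) :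
    x ^ (2 - a) / (ρ + a * (x - ρ)) ≤
      (2 ^ (2 - a) + 1) * ρ ^ (1 - a) + 2 / a * (2 ^ (1 / a - 1) + 1) * n ^ (1 / a - 1) := by
  have hn : 0 < n := hmap ▸ mul_pos (Real.rpow_pos_of_pos (hρ.trans hρx) _) (sub_pos.2 hρx)
  rcases le_total x (2 * ρ) with hx | hx
  · have := div_le_of_le_two_mul ha.le hρ hρx.le hx
    have : 0 < 2 / a * (2 ^ (1 / a - 1) + 1) * n ^ (1 / a - 1) := by positivity
    linarith
  · have := div_le_of_two_mul_le ha hρ hx hmap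
    have : 0 < (2 ^ (2 - a) + 1) * ρ ^ (1 - a) := by positivity
    linarith

end DominantDensity

open DominantDensity in
/-- Implicit differentiation of the dominant density in n:
`∂ₙ ρ₊ = ρ₊^(2 − γ⁺/γ⁻) / (ρ + (γ⁺/γ⁻)(ρ₊ − ρ))`; this derivative is positive and
bounded by `C·(ρ^(1 − γ⁺/γ⁻) + n₀^(γ⁻/γ⁺ − 1))` with `C` depending only on γ⁺, γ⁻. -/
theorem biFluid_dominant_density_hasDerivAt_n
    (gp gm : ℝ) (hgp : 0 < gp) (hgm : 0 < gm) :
    ∃ C : ℝ, 0 < C ∧ ∀ (ρ n₀ : ℝ) (y : ℝ → ℝ), 0 < ρ → 0 < n₀ →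
      (∀ᶠ n in nhds n₀, 0 < y n ∧ y n ^ (gp / gm) * (y n - ρ) = n * y n) →
      HasDerivAt y (y n₀ ^ (2 - gp / gm) / (ρ + (gp / gm) * (y n₀ - ρ))) n₀ ∧
      0 < y n₀ ^ (2 - gp / gm) / (ρ + (gp / gm) * (y n₀ - ρ)) ∧
      y n₀ ^ (2 - gp / gm) / (ρ + (gp / gm) * (y n₀ - ρ)) ≤
        C * (ρ ^ (1 - gp / gm) + n₀ ^ (gm / gp - 1)) := by
  set a := gp / gm with ha_def
  have ha : 0 < a := div_pos hgp hgm
  refine ⟨(2 ^ (2 - a) + 1) + 2 / a * (2 ^ (1 / a - 1) + 1), by positivity, ?_⟩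
  intro ρ n₀ y hρ hn₀ hy
  have hmap : ∀ᶠ n in 𝓝 n₀, ρ < y n ∧ dominantDensityMap a ρ (y n) = n := by
    filter_upwards [hy, eventually_gt_nhds hn₀] with n ⟨hyn, heq⟩ hn
    exact lt_and_map_eq_of_rpow_mul_sub_eq hn hyn heq
  obtain ⟨hρy, hmap₀⟩ := hmap.self_of_nhds
  have hden : 0 < ρ + a * (y n₀ - ρ) := by nlinarith
  refine ⟨hasDerivAt_of_eventually_map_eq ha.le hρ hmap,
    div_pos (Real.rpow_pos_of_pos (hρ.trans hρy) _) hden, ?_⟩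
  rw [show gm / gp - 1 = 1 / a - 1 by rw [ha_def, one_div, inv_div]]
  have hρa : 0 < ρ ^ (1 - a) := Real.rpow_pos_of_pos hρ _
  have hna : 0 < n₀ ^ (1 / a - 1) := Real.rpow_pos_of_pos hn₀ _
  have hA : 0 < 2 ^ (2 - a) + (1 : ℝ) := by positivity
  have hB : 0 < 2 / a * (2 ^ (1 / a - 1) + (1 : ℝ)) := by positivity
  calc _ ≤ (2 ^ (2 - a) + 1) * ρ ^ (1 - a) + 2 / a * (2 ^ (1 / a - 1) + 1) * n₀ ^ (1 / a - 1) :=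
        div_le_of_map_eq ha hρ hρy hmap₀
    _ ≤ _ := by nlinarith [mul_pos hA hna, mul_pos hB hρa]
end

section
/- Let γ⁺ ≥ 1 and γ⁻ ≥ 1 be real numbers. Then there exists a constant C > 0 depending only on γ⁺ and γ⁻ such that for all ρ > 0, n > 0 and all x > 0 satisfying x^(γ⁺/γ⁻)·(x − ρ) = n·x, the quantity γ⁺·x^γ⁺ / (ρ + (γ⁺/γ⁻)·(x − ρ)) (which equals the partial derivative ∂ρ P(ρ,n) of the pressure) is positive and at most C·(ρ^(γ⁺ − 1) + n^(γ⁻ − γ⁻/γ⁺)). -/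
/-- Bound on `∂ρ P(ρ,n) = γ⁺·ρ₊^γ⁺/(ρ + (γ⁺/γ⁻)(ρ₊ − ρ))`:
it is positive and at most `C·(ρ^(γ⁺−1) + n^(γ⁻ − γ⁻/γ⁺))` with `C = C(γ⁺,γ⁻)`. -/
theorem biFluid_pressure_deriv_rho_bound
    (gp gm : ℝ) (hgp : 1 ≤ gp) (hgm : 1 ≤ gm) :
    ∃ C : ℝ, 0 < C ∧ ∀ ρ n x : ℝ, 0 < ρ → 0 < n → 0 < x →
      x ^ (gp / gm) * (x - ρ) = n * x →
      0 < gp * x ^ gp / (ρ + (gp / gm) * (x - ρ)) ∧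
      gp * x ^ gp / (ρ + (gp / gm) * (x - ρ)) ≤
        C * (ρ ^ (gp - 1) + n ^ (gm - gm / gp)) := by
  have hgp0 : (0:ℝ) < gp := lt_of_lt_of_le one_pos hgp
  have hgm0 : (0:ℝ) < gm := lt_of_lt_of_le one_pos hgm
  refine ⟨gp * (2:ℝ) ^ gp + 2 * gm * (2:ℝ) ^ gm, by positivity, ?_⟩
  intro ρ n x hρ hn hx heq
  have hxg : (0:ℝ) < x ^ (gp/gm) := Real.rpow_pos_of_pos hx _
  have hsub : 0 < x - ρ := by
    have h : x - ρ = n * x / x ^ (gp/gm) := by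
      field_simp
      linarith [heq]
    rw [h]; positivity
  have hD : 0 < ρ + (gp/gm) * (x - ρ) := by positivity
  have hnum : 0 < gp * x ^ gp := by positivity
  refine ⟨div_pos hnum hD, ?_⟩
  have hnE : 0 < n ^ (gm - gm/gp) := Real.rpow_pos_of_pos hn _
  have hρE : 0 < ρ ^ (gp - 1) := Real.rpow_pos_of_pos hρ _
  have h2gp : (0:ℝ) < (2:ℝ) ^ gp := Real.rpow_pos_of_pos two_pos _
  have h2gm : (0:ℝ) < (2:ℝ) ^ gm := Real.rpow_pos_of_pos two_pos _
  by_cases hcase : x ≤ 2*ρ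
  · -- x ≤ 2ρ : use denominator ≥ ρ
    have h1 : gp * x ^ gp / (ρ + (gp/gm)*(x-ρ)) ≤ gp * x ^ gp / ρ := by
      apply div_le_div_of_nonneg_left (le_of_lt hnum) hρ
      nlinarith [le_of_lt hsub, le_of_lt (div_pos hgp0 hgm0)]
    have hx2 : x ^ gp ≤ (2:ℝ)^gp * ρ ^ gp := by
      rw [← Real.mul_rpow (by norm_num) hρ.le]
      exact Real.rpow_le_rpow hx.le hcase (by linarith)
    have h2 : gp * x ^ gp / ρ ≤ gp * ((2:ℝ)^gp * ρ ^ gp) / ρ := by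
      gcongr
    have h3 : gp * ((2:ℝ)^gp * ρ ^ gp) / ρ = gp * (2:ℝ)^gp * ρ ^ (gp - 1) := by
      rw [Real.rpow_sub hρ, Real.rpow_one]
      ring
    have h4 : gp * (2:ℝ)^gp * ρ ^ (gp - 1) ≤
        (gp * (2:ℝ) ^ gp + 2 * gm * (2:ℝ) ^ gm) * (ρ ^ (gp - 1) + n ^ (gm - gm/gp)) := by
      nlinarith [mul_pos (mul_pos hgp0 h2gp) hnE, mul_pos (mul_pos (mul_pos two_pos hgm0) h2gm) hρE,
        mul_pos (mul_pos (mul_pos two_pos hgm0) h2gm) hnE]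
    linarith
  · push_neg at hcase
    have hhalf : x / 2 ≤ x - ρ := by linarith
    -- denominator ≥ (gp/gm) * (x/2)
    have hD2 : (gp/gm) * (x/2) ≤ ρ + (gp/gm)*(x-ρ) := by
      have := mul_le_mul_of_nonneg_left hhalf (le_of_lt (div_pos hgp0 hgm0))
      linarith
    have h1 : gp * x ^ gp / (ρ + (gp/gm)*(x-ρ)) ≤ gp * x ^ gp / ((gp/gm) * (x/2)) :=
      div_le_div_of_nonneg_left (le_of_lt hnum) (by positivity) hD2
    have h2 : gp * x ^ gp / ((gp/gm) * (x/2)) = 2 * gm * x ^ (gp - 1) := by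
      rw [Real.rpow_sub hx, Real.rpow_one]
      field_simp
    -- x^(gp/gm) < 2n
    have hx2n : x ^ (gp/gm) ≤ 2 * n := by
      have h := heq
      nlinarith [hxg, mul_pos hxg hsub]
    -- x ≤ (2n)^(gm/gp)
    have hx2n' : x ≤ (2*n) ^ (gm/gp) := by
      have h5 : (x ^ (gp/gm)) ^ (gm/gp) ≤ (2*n) ^ (gm/gp) :=
        Real.rpow_le_rpow (le_of_lt hxg) hx2n (by positivity)
      rwa [← Real.rpow_mul hx.le, div_mul_div_comm,
        mul_comm gp gm, div_self (by positivity), Real.rpow_one] at h5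
    have hxpow : x ^ (gp - 1) ≤ (2*n) ^ (gm - gm/gp) := by
      have h6 : x ^ (gp - 1) ≤ ((2*n) ^ (gm/gp)) ^ (gp - 1) :=
        Real.rpow_le_rpow hx.le hx2n' (by linarith)
      have h7 : ((2*n) ^ (gm/gp)) ^ (gp - 1) = (2*n) ^ (gm - gm/gp) := by
        rw [← Real.rpow_mul (by positivity)]
        congr 1
        field_simp
      rwa [h7] at h6
    have h8 : (2*n) ^ (gm - gm/gp) ≤ (2:ℝ)^gm * n ^ (gm - gm/gp) := by
      rw [Real.mul_rpow (by norm_num) hn.le]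
      have hle : (2:ℝ) ^ (gm - gm/gp) ≤ (2:ℝ) ^ gm := by
        apply Real.rpow_le_rpow_of_exponent_le one_le_two
        have : 0 < gm/gp := div_pos hgm0 hgp0
        linarith
      exact mul_le_mul_of_nonneg_right hle (le_of_lt hnE)
    have h9 : 2 * gm * x ^ (gp - 1) ≤ 2 * gm * ((2:ℝ)^gm * n ^ (gm - gm/gp)) := by
      gcongr
      exact le_trans hxpow h8
    have h10 : 2 * gm * ((2:ℝ)^gm * n ^ (gm - gm/gp)) ≤
        (gp * (2:ℝ) ^ gp + 2 * gm * (2:ℝ) ^ gm) * (ρ ^ (gp - 1) + n ^ (gm - gm/gp)) := by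
      nlinarith [mul_pos (mul_pos hgp0 h2gp) hρE, mul_pos (mul_pos hgp0 h2gp) hnE,
        mul_pos (mul_pos (mul_pos two_pos hgm0) h2gm) hρE]
    linarith [h1, h2.le, h9, h10, h2 ▸ h1]
end

section
/- Let γ⁺ ≥ 1 and γ⁻ ≥ 1 be real numbers. Then there exists a constant C > 0 depending only on γ⁺ and γ⁻ such that for all ρ > 0, n > 0 and all x > 0 satisfying x^(γ⁺/γ⁻)·(x − ρ) = n·x, the quantity γ⁺·x^(γ⁺ + 1 − γ⁺/γ⁻) / (ρ + (γ⁺/γ⁻)·(x − ρ)) (which equals the partial derivative ∂ₙ P(ρ,n) of the pressure) is positive and at most C·(ρ^(γ⁺ − γ⁺/γ⁻) + n^(γ⁻ − 1)). -/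
/-- Bound on `∂ₙ P(ρ,n) = γ⁺·ρ₊^(γ⁺+1−γ⁺/γ⁻)/(ρ + (γ⁺/γ⁻)(ρ₊ − ρ))`:
it is positive and at most `C·(ρ^(γ⁺ − γ⁺/γ⁻) + n^(γ⁻ − 1))` with `C = C(γ⁺,γ⁻)`. -/
theorem biFluid_pressure_deriv_n_bound
    (gp gm : ℝ) (hgp : 1 ≤ gp) (hgm : 1 ≤ gm) :
    ∃ C : ℝ, 0 < C ∧ ∀ ρ n x : ℝ, 0 < ρ → 0 < n → 0 < x →
      x ^ (gp / gm) * (x - ρ) = n * x →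
      0 < gp * x ^ (gp + 1 - gp / gm) / (ρ + (gp / gm) * (x - ρ)) ∧
      gp * x ^ (gp + 1 - gp / gm) / (ρ + (gp / gm) * (x - ρ)) ≤
        C * (ρ ^ (gp - gp / gm) + n ^ (gm - 1)) := by
  have hgp0 : (0:ℝ) < gp := lt_of_lt_of_le one_pos hgp
  have hgm0 : (0:ℝ) < gm := lt_of_lt_of_le one_pos hgm
  have hq : 0 < gp / gm := div_pos hgp0 hgm0
  have hqle : gp / gm ≤ gp := by
    rw [div_le_iff₀ hgm0]; nlinarith
  have he1 : (1:ℝ) ≤ gp + 1 - gp / gm := by linarith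
  have ha0 : (0:ℝ) ≤ gp - gp / gm := by linarith
  have hb0 : (0:ℝ) ≤ gm - 1 := by linarith
  refine ⟨gp * 2 ^ (gp + 1 - gp / gm) + gm * 2 ^ gm, by positivity, ?_⟩
  intro ρ n x hρ hn hx heq
  have hxq : (0:ℝ) < x ^ (gp / gm) := Real.rpow_pos_of_pos hx _
  have hxρ : x - ρ = n * x / x ^ (gp / gm) := by
    rw [eq_div_iff hxq.ne', mul_comm]; exact heq
  have hxρ0 : 0 < x - ρ := by rw [hxρ]; positivity
  have hD : 0 < ρ + gp / gm * (x - ρ) := by positivity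
  have hxe : 0 < x ^ (gp + 1 - gp / gm) := Real.rpow_pos_of_pos hx _
  have hnum : 0 < gp * x ^ (gp + 1 - gp / gm) := by positivity
  refine ⟨div_pos hnum hD, ?_⟩
  have hρa : 0 < ρ ^ (gp - gp / gm) := Real.rpow_pos_of_pos hρ _
  have hnb : 0 < n ^ (gm - 1) := Real.rpow_pos_of_pos hn _
  have hA : (0:ℝ) < gp * 2 ^ (gp + 1 - gp / gm) := by positivity
  have hB : (0:ℝ) < gm * 2 ^ gm := by positivity
  rcases le_or_gt x (2 * ρ) with hc | hc
  · -- case x ≤ 2ρ, bound by the ρ term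
    have key : gp * x ^ (gp + 1 - gp / gm) / (ρ + gp / gm * (x - ρ)) ≤
        gp * 2 ^ (gp + 1 - gp / gm) * ρ ^ (gp - gp / gm) := by
      calc gp * x ^ (gp + 1 - gp / gm) / (ρ + gp / gm * (x - ρ))
          ≤ gp * (2 * ρ) ^ (gp + 1 - gp / gm) / ρ := by
            gcongr
            all_goals nlinarith [mul_pos hq hxρ0, hx.le]
        _ = gp * 2 ^ (gp + 1 - gp / gm) * ρ ^ (gp - gp / gm) := by
            rw [Real.mul_rpow (by norm_num) hρ.le,
              show gp + 1 - gp / gm = (gp - gp / gm) + 1 by ring,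
              Real.rpow_add hρ, Real.rpow_one]
            field_simp
    linarith [key, mul_pos hB hnb, mul_pos hA hnb, mul_pos hB hρa,
      show (gp * 2 ^ (gp + 1 - gp / gm) + gm * 2 ^ gm) * (ρ ^ (gp - gp / gm) + n ^ (gm - 1)) =
        gp * 2 ^ (gp + 1 - gp / gm) * ρ ^ (gp - gp / gm) + gp * 2 ^ (gp + 1 - gp / gm) * n ^ (gm - 1) +
        gm * 2 ^ gm * ρ ^ (gp - gp / gm) + gm * 2 ^ gm * n ^ (gm - 1) by ring]
  · -- case x > 2ρ, bound by the n term
    have hx2 : x / 2 ≤ x - ρ := by linarith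
    have hxn : x ^ (gp / gm) ≤ 2 * n := by
      have h1 : x ^ (gp / gm) * (x / 2) ≤ n * x := by
        calc x ^ (gp / gm) * (x / 2) ≤ x ^ (gp / gm) * (x - ρ) := by gcongr
          _ = n * x := heq
      nlinarith
    have hexp : gp / gm * (gm - 1) = gp - gp / gm := by
      field_simp
    have hxa : x ^ (gp - gp / gm) ≤ 2 ^ (gm - 1) * n ^ (gm - 1) := by
      calc x ^ (gp - gp / gm) = (x ^ (gp / gm)) ^ (gm - 1) := by
            rw [← hexp, Real.rpow_mul hx.le]
        _ ≤ (2 * n) ^ (gm - 1) := Real.rpow_le_rpow hxq.le hxn hb0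
        _ = 2 ^ (gm - 1) * n ^ (gm - 1) := Real.mul_rpow (by norm_num) hn.le
    have key : gp * x ^ (gp + 1 - gp / gm) / (ρ + gp / gm * (x - ρ)) ≤
        gm * 2 ^ gm * n ^ (gm - 1) := by
      have hden : gp / gm * (x / 2) ≤ ρ + gp / gm * (x - ρ) := by
        nlinarith [mul_le_mul_of_nonneg_left hx2 hq.le]
      calc gp * x ^ (gp + 1 - gp / gm) / (ρ + gp / gm * (x - ρ))
          ≤ gp * x ^ (gp + 1 - gp / gm) / (gp / gm * (x / 2)) := by
            gcongr
        _ = 2 * gm * x ^ (gp - gp / gm) := by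
            rw [show gp + 1 - gp / gm = (gp - gp / gm) + 1 by ring,
              Real.rpow_add hx, Real.rpow_one]
            field_simp
        _ ≤ 2 * gm * (2 ^ (gm - 1) * n ^ (gm - 1)) := by gcongr
        _ = gm * 2 ^ gm * n ^ (gm - 1) := by
            rw [Real.rpow_sub two_pos, Real.rpow_one]
            ring
    linarith [key, mul_pos hA hnb, mul_pos hA hρa, mul_pos hB hρa,
      show (gp * 2 ^ (gp + 1 - gp / gm) + gm * 2 ^ gm) * (ρ ^ (gp - gp / gm) + n ^ (gm - 1)) =
        gp * 2 ^ (gp + 1 - gp / gm) * ρ ^ (gp - gp / gm) + gp * 2 ^ (gp + 1 - gp / gm) * n ^ (gm - 1) +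
        gm * 2 ^ gm * ρ ^ (gp - gp / gm) + gm * 2 ^ gm * n ^ (gm - 1) by ring]
end

section
/- Let γ⁺ ≥ 1 and γ⁻ ≥ 1 be real numbers, let c₀ ≥ 1 and let s be a real number with 0 ≤ s ≤ c₀. Let 0 < n₁ ≤ n₂, and for i = 1, 2 let xᵢ > 0 satisfy xᵢ^(γ⁺/γ⁻)·(xᵢ − s·nᵢ) = nᵢ·xᵢ. Then x₂^γ⁺ − x₁^γ⁺ ≥ (min{1, γ⁺/γ⁻}/2)·(n₂^γ⁻ − n₁^γ⁻). Equivalently, the map n ↦ P(n·s, n) − (min{1, γ⁺/γ⁻}/2)·n^γ⁻ is nondecreasing on (0, ∞). -/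
/-!
Write `θ = γ⁺/γ⁻`, `α = 1 - θ⁻¹` and `u = x^θ`, so that `x^γ⁺ = u^γ⁻`. Since `x^(θ-1) = u^α`,
the root equation at `(s·n, n)` reads `n = f u` with `f u = u / (1 + s u^α) = rayDensity s α u`.
The function `f` is strictly increasing with `f u ≤ u` and `c f' ≤ 1` for `c = min 1 θ / 2`,
so `u ↦ u^γ⁻ - c (f u)^γ⁻` has nonnegative derivative `γ⁻ (u^(γ⁻-1) - c f' (f u)^(γ⁻-1))`.
-/

open Set

noncomputable def rayDensity (s α u : ℝ) : ℝ := u / (1 + s * u ^ α)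

section

variable {s α u : ℝ}

lemma one_le_one_add_mul_rpow (hs : 0 ≤ s) (hu : 0 < u) : 1 ≤ 1 + s * u ^ α := by
  have := mul_nonneg hs (Real.rpow_pos_of_pos hu α).le
  linarith

lemma rayDensity_pos (hs : 0 ≤ s) (hu : 0 < u) : 0 < rayDensity s α u :=
  div_pos hu (zero_lt_one.trans_le (one_le_one_add_mul_rpow hs hu))

lemma rayDensity_le_self (hs : 0 ≤ s) (hu : 0 < u) : rayDensity s α u ≤ u :=
  div_le_self hu.le (one_le_one_add_mul_rpow hs hu)

lemma hasDerivAt_rayDensity (hs : 0 ≤ s) (hu : 0 < u) :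
    HasDerivAt (rayDensity s α)
      ((1 + s * (1 - α) * u ^ α) / (1 + s * u ^ α) ^ 2) u := by
  have hden := one_le_one_add_mul_rpow (α := α) hs hu
  have hpow : HasDerivAt (fun u : ℝ => 1 + s * u ^ α) (s * (α * u ^ (α - 1))) u := by
    simpa using ((Real.hasDerivAt_rpow_const (p := α) (Or.inl hu.ne')).const_mul s).const_add 1
  refine ((hasDerivAt_id u).div hpow (by linarith)).congr_deriv ?_
  have hmul : u ^ (α - 1) * u = u ^ α := by
    rw [Real.rpow_sub_one hu.ne', div_mul_cancel₀ _ hu.ne']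
  simp only [id]
  congr 1
  linear_combination (-(s * α)) * hmul

lemma rayDensity_deriv_pos (hs : 0 ≤ s) (hα : α ≤ 1) (hu : 0 < u) :
    0 < (1 + s * (1 - α) * u ^ α) / (1 + s * u ^ α) ^ 2 := by
  have := mul_nonneg (mul_nonneg hs (sub_nonneg.2 hα)) (Real.rpow_pos_of_pos hu α).le
  have := one_le_one_add_mul_rpow (α := α) hs hu
  positivity

lemma mul_rayDensity_deriv_le_one {c : ℝ} (hs : 0 ≤ s) (hc : c ≤ 1) (hcα : c * (1 - α) ≤ 1)
    (hu : 0 < u) : c * ((1 + s * (1 - α) * u ^ α) / (1 + s * u ^ α) ^ 2) ≤ 1 := by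
  have ht : 0 ≤ s * u ^ α := mul_nonneg hs (Real.rpow_pos_of_pos hu α).le
  rw [mul_div_assoc', div_le_one (by positivity)]
  nlinarith [mul_le_mul_of_nonneg_right hcα ht]

lemma strictMonoOn_rayDensity (hs : 0 ≤ s) (hα : α ≤ 1) :
    StrictMonoOn (rayDensity s α) (Ioi 0) := by
  refine strictMonoOn_of_deriv_pos (convex_Ioi 0)
    (fun u hu => (hasDerivAt_rayDensity hs hu).continuousAt.continuousWithinAt) fun u hu => ?_
  rw [interior_Ioi] at hu
  rw [(hasDerivAt_rayDensity hs hu).deriv]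
  exact rayDensity_deriv_pos hs hα hu

lemma monotoneOn_rpow_sub_mul_rayDensity_rpow {γ c : ℝ} (hs : 0 ≤ s) (hγ : 1 ≤ γ)
    (hc : c ≤ 1) (hcα : c * (1 - α) ≤ 1) :
    MonotoneOn (fun u => u ^ γ - c * rayDensity s α u ^ γ) (Ioi 0) := by
  have hderiv : ∀ u ∈ Ioi (0 : ℝ), HasDerivAt (fun u => u ^ γ - c * rayDensity s α u ^ γ)
      (γ * u ^ (γ - 1) - c * ((1 + s * (1 - α) * u ^ α) / (1 + s * u ^ α) ^ 2 * γ *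
        rayDensity s α u ^ (γ - 1))) u := fun u hu =>
    (Real.hasDerivAt_rpow_const (Or.inl (ne_of_gt hu))).sub
      (((hasDerivAt_rayDensity hs hu).rpow_const (Or.inl (rayDensity_pos hs hu).ne')).const_mul c)
  refine monotoneOn_of_hasDerivWithinAt_nonneg (convex_Ioi 0)
    (fun u hu => (hderiv u hu).continuousAt.continuousWithinAt)
    (fun u hu => (hderiv u (interior_subset hu)).hasDerivWithinAt) fun u hu => ?_
  rw [interior_Ioi] at hu
  have hf := rayDensity_pos (α := α) hs hu
  have hslope := mul_rayDensity_deriv_le_one hs hc hcα hu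
  have hfpow : rayDensity s α u ^ (γ - 1) ≤ u ^ (γ - 1) :=
    Real.rpow_le_rpow hf.le (rayDensity_le_self hs hu) (by linarith)
  have := Real.rpow_pos_of_pos hf (γ - 1)
  nlinarith [mul_le_mul_of_nonneg_right hslope this.le]

lemma rayDensity_rpow_of_eq {θ x n : ℝ} (hθ : θ ≠ 0) (hs : 0 ≤ s) (hx : 0 < x)
    (h : x ^ θ * (x - s * n) = n * x) : rayDensity s (1 - θ⁻¹) (x ^ θ) = n := by
  have hpow : (x ^ θ) ^ (1 - θ⁻¹) = x ^ θ / x := by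
    rw [← Real.rpow_mul hx.le, mul_one_sub, mul_inv_cancel₀ hθ, Real.rpow_sub_one hx.ne']
  have hden : 0 < 1 + s * (x ^ θ / x) := by
    have := mul_nonneg hs (div_pos (Real.rpow_pos_of_pos hx θ) hx).le
    linarith
  rw [rayDensity, hpow, div_eq_iff hden.ne']
  field_simp
  linear_combination h

end

theorem biFluid_pressure_along_ray_monotone_general
    (gp gm s n₁ n₂ x₁ x₂ : ℝ) (hgp : 1 ≤ gp) (hgm : 1 ≤ gm)
    (hs₀ : 0 ≤ s)
    (hn : n₁ ≤ n₂)
    (hx₁ : 0 < x₁) (heq₁ : x₁ ^ (gp / gm) * (x₁ - s * n₁) = n₁ * x₁)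
    (hx₂ : 0 < x₂) (heq₂ : x₂ ^ (gp / gm) * (x₂ - s * n₂) = n₂ * x₂) :
    min 1 (gp / gm) / 2 * (n₂ ^ gm - n₁ ^ gm) ≤ x₂ ^ gp - x₁ ^ gp := by
  have hθ : 0 < gp / gm := by positivity
  have hα : 1 - (gp / gm)⁻¹ ≤ 1 := sub_le_self _ (inv_nonneg.2 hθ.le)
  have hc : min 1 (gp / gm) / 2 * (1 - (1 - (gp / gm)⁻¹)) ≤ 1 := by
    rw [sub_sub_cancel, div_mul_eq_mul_div, div_le_one two_pos]
    calc min 1 (gp / gm) * (gp / gm)⁻¹ ≤ gp / gm * (gp / gm)⁻¹ := by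
          gcongr; exact min_le_right _ _
      _ ≤ 2 := by rw [mul_inv_cancel₀ hθ.ne']; norm_num
  have hpress : ∀ x : ℝ, 0 < x → x ^ gp = (x ^ (gp / gm)) ^ gm := fun x hx => by
    rw [← Real.rpow_mul hx.le, div_mul_cancel₀ _ (by positivity)]
  have hu₁ : x₁ ^ (gp / gm) ∈ Ioi 0 := Real.rpow_pos_of_pos hx₁ _
  have hu₂ : x₂ ^ (gp / gm) ∈ Ioi 0 := Real.rpow_pos_of_pos hx₂ _
  have hdens₁ := rayDensity_rpow_of_eq hθ.ne' hs₀ hx₁ heq₁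
  have hdens₂ := rayDensity_rpow_of_eq hθ.ne' hs₀ hx₂ heq₂
  have hu : x₁ ^ (gp / gm) ≤ x₂ ^ (gp / gm) := by
    rwa [← (strictMonoOn_rayDensity hs₀ hα).le_iff_le hu₁ hu₂, hdens₁, hdens₂]
  have hmono := monotoneOn_rpow_sub_mul_rayDensity_rpow hs₀ hgm
    (by linarith [min_le_left 1 (gp / gm)]) hc hu₁ hu₂ hu
  simp only [hdens₁, hdens₂] at hmono
  rw [hpress x₁ hx₁, hpress x₂ hx₂]
  linarith

/-- Monotonicity of `n ↦ P(n·s, n) − (min{1,γ⁺/γ⁻}/2)·n^γ⁻`: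
for `0 < n₁ ≤ n₂` and roots `xᵢ` at `(ρ,n) = (s·nᵢ, nᵢ)`,
`x₂^γ⁺ − x₁^γ⁺ ≥ (min{1,γ⁺/γ⁻}/2)·(n₂^γ⁻ − n₁^γ⁻)`. -/
theorem biFluid_pressure_along_ray_monotone
    (gp gm c₀ s n₁ n₂ x₁ x₂ : ℝ) (hgp : 1 ≤ gp) (hgm : 1 ≤ gm)
    (hc₀ : 1 ≤ c₀) (hs₀ : 0 ≤ s) (hsc : s ≤ c₀)
    (hn₁ : 0 < n₁) (hn : n₁ ≤ n₂)
    (hx₁ : 0 < x₁) (heq₁ : x₁ ^ (gp / gm) * (x₁ - s * n₁) = n₁ * x₁)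
    (hx₂ : 0 < x₂) (heq₂ : x₂ ^ (gp / gm) * (x₂ - s * n₂) = n₂ * x₂) :
    min 1 (gp / gm) / 2 * (n₂ ^ gm - n₁ ^ gm) ≤ x₂ ^ gp - x₁ ^ gp :=
  biFluid_pressure_along_ray_monotone_general gp gm s n₁ n₂ x₁ x₂ hgp hgm hs₀ hn hx₁ heq₁ hx₂ heq₂
end

section
/- Let P : ℝ × ℝ → ℝ be continuously differentiable, and for ρ > 0 and n ∈ ℝ define H(ρ, n) := ρ · ∫_{ζ=1}^{ρ} P(ζ, ζ·n/ρ)/ζ² dζ. Then for every ρ > 0 and every n, the function H is differentiable at (ρ, n) and satisfies the Euler-type identity P(ρ, n) = ρ·∂ρ H(ρ, n) + n·∂ₙ H(ρ, n) − H(ρ, n). -/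
/-!
Substituting `ζ = exp (r * t)` writes `H (exp r, n)` as `exp r * r * ∫ t in 0..1, k (r, n, t)` with
an integrand `k` that is `C¹` on all of `ℝ³`, so `H` is differentiable wherever `ρ > 0`. Only the
ratio `n / ρ` enters the integrand, hence `H (l * ρ, l * n) = l * ρ * ∫ ζ in 1..l * ρ, u ζ` for a
fixed `u`; differentiating at `l = 1`, once by the chain rule and once by the fundamental theorem
of calculus, gives `ρ ∂ρH + n ∂ₙH = H + P`.
-/

open Set Metric MeasureTheory Real Filter Topology
open scoped Interval

theorem differentiable_intervalIntegral_of_contDiff {E G : Type*} [NormedAddCommGroup E]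
    [NormedSpace ℝ E] [ProperSpace E] [NormedAddCommGroup G] [NormedSpace ℝ G]
    {F : E → ℝ → G} (hF : ContDiff ℝ 1 (Function.uncurry F)) (a b : ℝ) :
    Differentiable ℝ fun p => ∫ t in a..b, F p t := by
  intro p₀
  set F' : E → ℝ → E →L[ℝ] G := fun p t =>
    (fderiv ℝ (Function.uncurry F) (p, t)).comp (ContinuousLinearMap.inl ℝ E ℝ)
  have hF'_cont : Continuous (Function.uncurry F') :=
    (hF.continuous_fderiv one_ne_zero).clm_comp continuous_const
  obtain ⟨C, hC⟩ := ((isCompact_closedBall p₀ 1).prod isCompact_uIcc).exists_bound_of_continuousOn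
    hF'_cont.continuousOn
  have hF_cont (p : E) : Continuous (F p) := hF.continuous.comp (Continuous.prodMk_right p)
  refine (intervalIntegral.hasFDerivAt_integral_of_dominated_of_fderiv_le (F' := F')
    (bound := fun _ => C) (closedBall_mem_nhds p₀ one_pos)
    (.of_forall fun p => (hF_cont p).aestronglyMeasurable) ((hF_cont p₀).intervalIntegrable _ _)
    (hF'_cont.comp (Continuous.prodMk_right p₀)).aestronglyMeasurable
    (.of_forall fun t ht p hp => hC (p, t) ⟨hp, uIoc_subset_uIcc ht⟩)
    intervalIntegrable_const
    (.of_forall fun t _ p _ => ?_)).differentiableAt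
  exact ((hF.differentiable one_ne_zero) (p, t)).hasFDerivAt.comp p
    (hasFDerivAt_prodMk_left (𝕜 := ℝ) p t)

theorem integral_one_exp_eq {g : ℝ → ℝ} (hg : ContinuousOn g (Ioi 0)) (r : ℝ) :
    ∫ ζ in (1:ℝ)..exp r, g ζ = r * ∫ t in (0:ℝ)..1, exp (r * t) * g (exp (r * t)) := by
  have hsubst := intervalIntegral.integral_comp_mul_deriv' (a := 0) (b := 1)
    (f := fun t => exp (r * t)) (f' := fun t => r * exp (r * t)) (g := g)
    (fun t _ => by simpa [mul_comm] using ((hasDerivAt_id t).const_mul r).exp)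
    (by fun_prop) (hg.mono (image_subset_iff.2 fun t _ => exp_pos _))
  simp only [mul_zero, exp_zero, mul_one, Function.comp_def] at hsubst
  rw [← hsubst, ← intervalIntegral.integral_const_mul]
  congr 1 with t
  ring

theorem hasDerivAt_mul_integral_one {u : ℝ → ℝ} (hu : ContinuousOn u (Ioi 0)) {x : ℝ}
    (hx : 0 < x) :
    HasDerivAt (fun y => y * ∫ ζ in (1:ℝ)..y, u ζ) ((∫ ζ in (1:ℝ)..x, u ζ) + x * u x) x := by
  have hint : IntervalIntegrable u volume 1 x :=
    (hu.mono fun ζ hζ => lt_of_lt_of_le (lt_min one_pos hx) hζ.1).intervalIntegrable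
  have hftc := intervalIntegral.integral_hasDerivAt_right hint
    (hu.stronglyMeasurableAtFilter isOpen_Ioi x hx) (hu.continuousAt (Ioi_mem_nhds hx))
  simpa only [one_mul] using (hasDerivAt_id' x).fun_mul hftc

theorem DifferentiableAt.hasDerivAt_comp_smul {E F : Type*} [NormedAddCommGroup E]
    [NormedSpace ℝ E] [NormedAddCommGroup F] [NormedSpace ℝ F] {f : E → F} {p : E}
    (hf : DifferentiableAt ℝ f p) :
    HasDerivAt (fun l : ℝ => f (l • p)) (fderiv ℝ f p p) 1 := by
  have hray : HasDerivAt (fun l : ℝ => l • p) p 1 := by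
    simpa using (hasDerivAt_id (1:ℝ)).smul_const p
  exact hf.hasFDerivAt.comp_hasDerivAt_of_eq 1 hray (one_smul ℝ p).symm

theorem ContinuousLinearMap.apply_prod_eq {F : Type*} [NormedAddCommGroup F] [NormedSpace ℝ F]
    (L : ℝ × ℝ →L[ℝ] F) (a b : ℝ) : L (a, b) = a • L (1, 0) + b • L (0, 1) := by
  rw [← map_smul, ← map_smul, ← map_add]
  simp

section PressurePotential

variable (P : ℝ × ℝ → ℝ)

noncomputable def pressurePotential (p : ℝ × ℝ) : ℝ :=
  p.1 * ∫ ζ in (1:ℝ)..p.1, P (ζ, ζ * p.2 / p.1) / ζ ^ 2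

variable {P}

theorem continuousOn_pressure_div_sq (hP : Continuous P) (n ρ : ℝ) :
    ContinuousOn (fun ζ => P (ζ, ζ * n / ρ) / ζ ^ 2) (Ioi 0) :=
  (hP.comp (by fun_prop)).continuousOn.div (by fun_prop) fun ζ hζ => pow_ne_zero 2 (ne_of_gt hζ)

theorem differentiable_pressurePotential_exp (hP : ContDiff ℝ 1 P) :
    Differentiable ℝ fun q : ℝ × ℝ => pressurePotential P (exp q.1, q.2) := by
  have hsubst : (fun q : ℝ × ℝ => pressurePotential P (exp q.1, q.2)) = fun q => exp q.1 * (q.1 *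
      ∫ t in (0:ℝ)..1, exp (q.1 * t) *
        (P (exp (q.1 * t), exp (q.1 * t) * q.2 / exp q.1) / exp (q.1 * t) ^ 2)) := by
    ext q
    exact congrArg _ (integral_one_exp_eq (continuousOn_pressure_div_sq hP.continuous _ _) _)
  rw [hsubst]
  have hintegrand : ContDiff ℝ 1 (Function.uncurry fun (q : ℝ × ℝ) (t : ℝ) => exp (q.1 * t) *
      (P (exp (q.1 * t), exp (q.1 * t) * q.2 / exp q.1) / exp (q.1 * t) ^ 2)) := by
    simp only [Function.uncurry_def]
    fun_prop (disch := exact fun _ => by positivity)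
  have := differentiable_intervalIntegral_of_contDiff hintegrand 0 1
  fun_prop

theorem differentiableAt_pressurePotential (hP : ContDiff ℝ 1 P) {ρ : ℝ} (n : ℝ) (hρ : 0 < ρ) :
    DifferentiableAt ℝ (pressurePotential P) (ρ, n) := by
  have hlog : DifferentiableAt ℝ (fun p : ℝ × ℝ => (log p.1, p.2)) (ρ, n) :=
    (differentiableAt_fst.log hρ.ne').prodMk differentiableAt_snd
  refine ((differentiable_pressurePotential_exp hP _).comp _ hlog).congr_of_eventuallyEq ?_
  filter_upwards [(isOpen_lt continuous_const continuous_fst).mem_nhds hρ] with p hp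
  simp [exp_log hp]

theorem pressurePotential_mul {ρ l : ℝ} (n : ℝ) (hρ : 0 < ρ) (hl : 0 < l) :
    pressurePotential P (l * ρ, l * n) =
      l * ρ * ∫ ζ in (1:ℝ)..l * ρ, P (ζ, ζ * n / ρ) / ζ ^ 2 := by
  have hratio (ζ : ℝ) : ζ * (l * n) / (l * ρ) = ζ * n / ρ := by field_simp
  simp only [pressurePotential, hratio]

theorem hasDerivAt_pressurePotential_mul (hP : Continuous P) {ρ : ℝ} (n : ℝ) (hρ : 0 < ρ) :
    HasDerivAt (fun l => pressurePotential P (l * ρ, l * n))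
      (pressurePotential P (ρ, n) + P (ρ, n)) 1 := by
  have hchain := (hasDerivAt_mul_integral_one (continuousOn_pressure_div_sq hP n ρ) hρ).comp_of_eq
    1 (hasDerivAt_mul_const ρ) (one_mul ρ).symm
  refine (hchain.congr_of_eventuallyEq ?_).congr_deriv ?_
  · filter_upwards [eventually_gt_nhds one_pos] with l hl
    exact pressurePotential_mul n hρ hl
  · rw [mul_div_cancel_left₀ n hρ.ne', pressurePotential]
    generalize (∫ ζ in (1:ℝ)..ρ, P (ζ, ζ * n / ρ) / ζ ^ 2) = I
    field_simp

theorem pressurePotential_euler (hP : ContDiff ℝ 1 P) {ρ : ℝ} (n : ℝ) (hρ : 0 < ρ) :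
    P (ρ, n) = ρ * fderiv ℝ (pressurePotential P) (ρ, n) (1, 0) +
      n * fderiv ℝ (pressurePotential P) (ρ, n) (0, 1) - pressurePotential P (ρ, n) := by
  have hray := (differentiableAt_pressurePotential hP n hρ).hasDerivAt_comp_smul
  simp only [Prod.smul_mk, smul_eq_mul] at hray
  have hderiv := hray.unique (hasDerivAt_pressurePotential_mul hP.continuous n hρ)
  rw [ContinuousLinearMap.apply_prod_eq, smul_eq_mul, smul_eq_mul] at hderiv
  linarith

end PressurePotential

/-- Euler-type identity for the pressure potential
`H(ρ,n) = ρ·∫_{1}^{ρ} P(ζ, ζ n/ρ)/ζ² dζ`: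
for ρ > 0, `H` is differentiable at `(ρ,n)` and
`P(ρ,n) = ρ·∂ρH + n·∂ₙH − H`. -/
theorem biFluid_pressure_potential_euler_identity
    (P : ℝ × ℝ → ℝ) (hP : ContDiff ℝ 1 P)
    (H : ℝ × ℝ → ℝ)
    (hH : ∀ ρ n : ℝ, 0 < ρ →
      H (ρ, n) = ρ * ∫ ζ in (1:ℝ)..ρ, P (ζ, ζ * n / ρ) / ζ ^ 2) :
    ∀ ρ n : ℝ, 0 < ρ →
      DifferentiableAt ℝ H (ρ, n) ∧
      P (ρ, n) =
        ρ * fderiv ℝ H (ρ, n) (1, 0) + n * fderiv ℝ H (ρ, n) (0, 1) - H (ρ, n) := by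
  intro ρ n hρ
  have hH_eq : H =ᶠ[𝓝 (ρ, n)] pressurePotential P := by
    filter_upwards [(isOpen_lt continuous_const continuous_fst).mem_nhds hρ] with p hp
    exact hH p.1 p.2 hp
  refine ⟨(differentiableAt_pressurePotential hP n hρ).congr_of_eventuallyEq hH_eq, ?_⟩
  rw [hH_eq.fderiv_eq, hH_eq.eq_of_nhds]
  exact pressurePotential_euler hP n hρ
end

section
/- Let γ⁺ ≥ 1 and γ⁻ ≥ 1 be real numbers and let n > 0. For each ρ > 0 let x(ρ) denote the unique positive solution of x^(γ⁺/γ⁻)·(x − ρ) = n·x. Then the limit as ρ → 0⁺ of (x(ρ)^γ⁺ − n^γ⁻)/ρ exists and equals γ⁻ · n^(γ⁻ − γ⁻/γ⁺). (That is, ∂ρ P(0, n) = γ⁻ · n^(γ⁻ − γ⁻/γ⁺).) -/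
/-!
Write `g = γ⁺/γ⁻` and `y = x^g`. The defining equation reads `y - n = n ρ / (x - ρ)`, so `y > n`,
i.e. `x > n^(1/g)`, and feeding this back squeezes `y ↓ n`; hence `x → n^(1/g)` and
`(y - n)/ρ → n / n^(1/g)`. Since `x^γ⁺ = y^γ⁻`, the chain rule for `z ↦ z^γ⁻`
at `z = n` gives the limit `γ⁻ n^(γ⁻-1) · n / n^(γ⁻/γ⁺)`.
-/

open Filter Topology

theorem HasDerivAt.tendsto_sub_div {α : Type*} {l : Filter α} {f : ℝ → ℝ}
    {f' a L : ℝ} {u v : α → ℝ} (hf : HasDerivAt f f' a) (hu : Tendsto u l (𝓝[≠] a))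
    (hv : Tendsto (fun i => (u i - a) / v i) l (𝓝 L)) :
    Tendsto (fun i => (f (u i) - f a) / v i) l (𝓝 (f' * L)) := by
  refine ((hasDerivAt_iff_tendsto_slope.mp hf).comp hu |>.mul hv).congr' ?_
  filter_upwards [hu self_mem_nhdsWithin] with i (hi : u i ≠ a)
  rw [Function.comp_apply, slope_def_field]
  field_simp [sub_ne_zero.mpr hi]

section BiFluid

variable {g n x ρ : ℝ}

lemma lt_of_rpow_mul_sub_eq (hn : 0 < n) (hx : 0 < x) (h : x ^ g * (x - ρ) = n * x) :
    ρ < x := by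
  have : 0 < x ^ g * (x - ρ) := h ▸ mul_pos hn hx
  exact sub_pos.mp (pos_of_mul_pos_right this (Real.rpow_pos_of_pos hx g).le)

lemma rpow_sub_eq_of_rpow_mul_sub_eq (hn : 0 < n) (hx : 0 < x)
    (h : x ^ g * (x - ρ) = n * x) : x ^ g - n = n * ρ / (x - ρ) := by
  have := sub_pos.mpr (lt_of_rpow_mul_sub_eq hn hx h)
  field_simp
  linear_combination h

lemma lt_rpow_of_rpow_mul_sub_eq (hn : 0 < n) (hρ : 0 < ρ) (hx : 0 < x)
    (h : x ^ g * (x - ρ) = n * x) : n < x ^ g := by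
  have := sub_pos.mpr (lt_of_rpow_mul_sub_eq hn hx h)
  have : 0 < n * ρ / (x - ρ) := by positivity
  linarith [rpow_sub_eq_of_rpow_mul_sub_eq hn hx h]

variable {x : ℝ → ℝ} (hg : 0 < g) (hn : 0 < n)
  (hx : ∀ ρ, 0 < ρ → 0 < x ρ ∧ x ρ ^ g * (x ρ - ρ) = n * x ρ)
include hg hn hx

lemma rpow_inv_lt_of_rpow_mul_sub_eq (hρ : 0 < ρ) : n ^ g⁻¹ < x ρ := by
  obtain ⟨hxρ, h⟩ := hx ρ hρ
  calc n ^ g⁻¹ < (x ρ ^ g) ^ g⁻¹ :=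
        Real.rpow_lt_rpow hn.le (lt_rpow_of_rpow_mul_sub_eq hn hρ hxρ h) (inv_pos.mpr hg)
    _ = x ρ := Real.rpow_rpow_inv hxρ.le hg.ne'

lemma tendsto_rpow_nhdsGT_of_rpow_mul_sub_eq :
    Tendsto (fun ρ => x ρ ^ g) (𝓝[>] 0) (𝓝[>] n) := by
  set c := n ^ g⁻¹
  have hc : 0 < c := Real.rpow_pos_of_pos hn _
  have hbound : Tendsto (fun ρ => n + n * ρ / (c - ρ)) (𝓝[>] 0) (𝓝 n) := by
    have : Tendsto (fun ρ => n + n * ρ / (c - ρ)) (𝓝 0) (𝓝 (n + n * 0 / (c - 0))) :=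
      tendsto_const_nhds.add ((tendsto_const_nhds.mul tendsto_id).div
        (tendsto_const_nhds.sub tendsto_id) (by simpa using hc.ne'))
    simpa using this.mono_left nhdsWithin_le_nhds
  have hsandwich : ∀ᶠ ρ in 𝓝[>] 0, n < x ρ ^ g ∧ x ρ ^ g ≤ n + n * ρ / (c - ρ) := by
    filter_upwards [Ioo_mem_nhdsGT hc] with ρ ⟨hρ, hρc⟩
    obtain ⟨hxρ, h⟩ := hx ρ hρ
    have hcx := rpow_inv_lt_of_rpow_mul_sub_eq hg hn hx hρ
    have hdiff := rpow_sub_eq_of_rpow_mul_sub_eq hn hxρ h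
    have : n * ρ / (x ρ - ρ) ≤ n * ρ / (c - ρ) := by gcongr
    exact ⟨lt_rpow_of_rpow_mul_sub_eq hn hρ hxρ h, by linarith⟩
  refine tendsto_nhdsWithin_iff.mpr ⟨?_, hsandwich.mono fun _ h => h.1⟩
  exact tendsto_of_tendsto_of_tendsto_of_le_of_le' tendsto_const_nhds hbound
    (hsandwich.mono fun _ h => h.1.le) (hsandwich.mono fun _ h => h.2)

lemma tendsto_nhds_rpow_inv_of_rpow_mul_sub_eq : Tendsto x (𝓝[>] 0) (𝓝 (n ^ g⁻¹)) := by
  refine ((tendsto_rpow_nhdsGT_of_rpow_mul_sub_eq hg hn hx).mono_right nhdsWithin_le_nhds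
    |>.rpow_const (p := g⁻¹) (Or.inl hn.ne')).congr' ?_
  filter_upwards [self_mem_nhdsWithin] with ρ hρ
  exact Real.rpow_rpow_inv (hx ρ hρ).1.le hg.ne'

lemma tendsto_rpow_sub_div_of_rpow_mul_sub_eq :
    Tendsto (fun ρ => (x ρ ^ g - n) / ρ) (𝓝[>] 0) (𝓝 (n / n ^ g⁻¹)) := by
  have hid : Tendsto (fun ρ : ℝ => ρ) (𝓝[>] 0) (𝓝 0) :=
    tendsto_nhdsWithin_of_tendsto_nhds tendsto_id
  have := tendsto_const_nhds (x := n) |>.div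
    ((tendsto_nhds_rpow_inv_of_rpow_mul_sub_eq hg hn hx).sub hid)
    (by simpa using (Real.rpow_pos_of_pos hn g⁻¹).ne')
  refine (sub_zero (n ^ g⁻¹) ▸ this).congr' ?_
  filter_upwards [self_mem_nhdsWithin] with ρ (hρ : 0 < ρ)
  obtain ⟨hxρ, h⟩ := hx ρ hρ
  show n / (x ρ - ρ) = (x ρ ^ g - n) / ρ
  rw [rpow_sub_eq_of_rpow_mul_sub_eq hn hxρ h]
  field_simp

end BiFluid

/-- `∂ρ P(0, n) = γ⁻ · n^(γ⁻ − γ⁻/γ⁺)`: the difference quotient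
`(x(ρ)^γ⁺ − n^γ⁻)/ρ` tends to `γ⁻ · n^(γ⁻ − γ⁻/γ⁺)` as `ρ → 0⁺`. -/
theorem biFluid_pressure_deriv_rho_at_zero
    (gp gm n : ℝ) (hgp : 1 ≤ gp) (hgm : 1 ≤ gm) (hn : 0 < n)
    (x : ℝ → ℝ)
    (hx : ∀ ρ : ℝ, 0 < ρ → 0 < x ρ ∧ x ρ ^ (gp / gm) * (x ρ - ρ) = n * x ρ) :
    Filter.Tendsto (fun ρ => (x ρ ^ gp - n ^ gm) / ρ)
      (nhdsWithin 0 (Set.Ioi 0)) (nhds (gm * n ^ (gm - gm / gp))) := by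
  have hgp0 : 0 < gp := by linarith
  have hgm0 : 0 < gm := by linarith
  have hg : 0 < gp / gm := div_pos hgp0 hgm0
  have hy := tendsto_rpow_nhdsGT_of_rpow_mul_sub_eq hg hn hx
  have hslope := (Real.hasDerivAt_rpow_const (p := gm) (Or.inl hn.ne')).tendsto_sub_div
    (hy.mono_right (nhdsGT_le_nhdsNE n)) (tendsto_rpow_sub_div_of_rpow_mul_sub_eq hg hn hx)
  have hlim : gm * n ^ (gm - 1) * (n / n ^ (gp / gm)⁻¹) = gm * n ^ (gm - gm / gp) := by
    rw [inv_div, mul_assoc, ← mul_div_assoc, ← Real.rpow_add_one hn.ne', sub_add_cancel,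
      ← Real.rpow_sub hn]
  rw [← hlim]
  refine hslope.congr' ?_
  filter_upwards [self_mem_nhdsWithin] with ρ hρ
  rw [← Real.rpow_mul (hx ρ hρ).1.le, div_mul_cancel₀ gp hgm0.ne']
end

section
/- Let γ⁺ > 0 and γ⁻ > 0 be real numbers and let ρ > 0. For each n > 0 let x(n) denote the unique positive solution of x^(γ⁺/γ⁻)·(x − ρ) = n·x. Then the limit as n → 0⁺ of (x(n)^γ⁺ − ρ^γ⁺)/n exists and equals γ⁺ · ρ^(γ⁺ − γ⁺/γ⁻). (That is, ∂ₙ P(ρ, 0) = γ⁺ · ρ^(γ⁺ − γ⁺/γ⁻).) -/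
/-- `∂ₙ P(ρ, 0) = γ⁺ · ρ^(γ⁺ − γ⁺/γ⁻)`: the difference quotient
`(x(n)^γ⁺ − ρ^γ⁺)/n` tends to `γ⁺ · ρ^(γ⁺ − γ⁺/γ⁻)` as `n → 0⁺`. -/
theorem biFluid_pressure_deriv_n_at_zero
    (gp gm ρ : ℝ) (hgp : 0 < gp) (hgm : 0 < gm) (hρ : 0 < ρ)
    (x : ℝ → ℝ)
    (hx : ∀ n : ℝ, 0 < n → 0 < x n ∧ x n ^ (gp / gm) * (x n - ρ) = n * x n) :
    Filter.Tendsto (fun n => (x n ^ gp - ρ ^ gp) / n)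
      (nhdsWithin 0 (Set.Ioi 0)) (nhds (gp * ρ ^ (gp - gp / gm))) := by
  set g := gp / gm with hg
  have hgpos : 0 < g := div_pos hgp hgm
  have key : ∀ n : ℝ, 0 < n → x n - ρ = n * x n ^ (1 - g) ∧ ρ < x n := by
    intro n hn
    obtain ⟨hxp, heq⟩ := hx n hn
    have hxg : (0:ℝ) < x n ^ g := Real.rpow_pos_of_pos hxp g
    have h1 : x n - ρ = n * x n ^ (1 - g) := by
      have hpow : x n ^ (1 - g) = x n / x n ^ g := by
        rw [Real.rpow_sub hxp, Real.rpow_one]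
      rw [hpow]
      field_simp
      nlinarith [heq]
    have h2 : ρ < x n := by
      nlinarith [Real.rpow_pos_of_pos hxp (1 - g), h1]
    exact ⟨h1, h2⟩
  -- bound: for small n, x n ≤ ρ + n * K
  set K : ℝ := max (ρ ^ (1 - g)) (2 * ρ + 2) with hK
  have hbound : ∀ n : ℝ, 0 < n → n ≤ 1/2 → x n ≤ ρ + n * K := by
    intro n hn hn2
    obtain ⟨h1, h2⟩ := key n hn
    have hxp : 0 < x n := (hx n hn).1
    rcases le_or_gt (1 - g) 0 with hp | hp
    · have : x n ^ (1 - g) ≤ ρ ^ (1 - g) :=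
        Real.rpow_le_rpow_of_nonpos hρ h2.le hp
      have hK1 : x n ^ (1 - g) ≤ K := this.trans (le_max_left _ _)
      nlinarith
    · have hple : (1 - g) ≤ 1 := by linarith
      have hb : x n ^ (1 - g) ≤ 1 + x n := by
        rcases le_or_gt (x n) 1 with hle | hgt
        · have := Real.rpow_le_one hxp.le hle hp.le
          linarith
        · have := Real.rpow_le_rpow_of_exponent_le hgt.le hple
          rw [Real.rpow_one] at this
          linarith
      have hxle : x n ≤ 2 * ρ + 1 := by nlinarith
      have hK1 : x n ^ (1 - g) ≤ K := by
        have : x n ^ (1 - g) ≤ 2 * ρ + 2 := by linarith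
        exact this.trans (le_max_right _ _)
      nlinarith
  -- x n → ρ as n → 0⁺
  have hsmall : ∀ᶠ n in nhdsWithin (0:ℝ) (Set.Ioi 0), n ≤ 1/2 :=
    eventually_nhdsWithin_of_eventually_nhds
      ((eventually_lt_nhds (by norm_num : (0:ℝ) < 1/2)).mono fun n h => h.le)
  have hxt : Filter.Tendsto x (nhdsWithin 0 (Set.Ioi 0)) (nhds ρ) := by
    refine tendsto_of_tendsto_of_tendsto_of_le_of_le'
      (g := fun _ : ℝ => ρ) (h := fun n => ρ + n * K) tendsto_const_nhds ?_ ?_ ?_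
    · have : Filter.Tendsto (fun n : ℝ => ρ + n * K) (nhds 0) (nhds (ρ + 0 * K)) :=
        (continuous_const.add (continuous_id.mul continuous_const)).tendsto 0
      simpa using this.mono_left nhdsWithin_le_nhds
    · filter_upwards [self_mem_nhdsWithin] with n hn
      exact (key n hn).2.le
    · filter_upwards [self_mem_nhdsWithin, hsmall] with n hn hn2
      exact hbound n hn hn2
  -- x n → ρ within {ρ}ᶜ
  have hxt' : Filter.Tendsto x (nhdsWithin 0 (Set.Ioi 0)) (nhdsWithin ρ {ρ}ᶜ) := by
    apply tendsto_nhdsWithin_of_tendsto_nhds_of_eventually_within _ hxt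
    filter_upwards [self_mem_nhdsWithin] with n hn
    exact ne_of_gt (key n hn).2
  -- slope limit
  have hderiv : HasDerivAt (fun y : ℝ => y ^ gp) (gp * ρ ^ (gp - 1)) ρ :=
    Real.hasDerivAt_rpow_const (Or.inl hρ.ne')
  have hslope : Filter.Tendsto (fun y => (y ^ gp - ρ ^ gp) / (y - ρ))
      (nhdsWithin ρ {ρ}ᶜ) (nhds (gp * ρ ^ (gp - 1))) := by
    have := hasDerivAt_iff_tendsto_slope.mp hderiv
    refine this.congr fun y => ?_
    simp [slope_def_field, div_eq_div_iff]
  -- power factor limit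
  have hpowt : Filter.Tendsto (fun n => x n ^ (1 - g)) (nhdsWithin 0 (Set.Ioi 0))
      (nhds (ρ ^ (1 - g))) :=
    ((Real.continuousAt_rpow_const ρ (1 - g) (Or.inl hρ.ne')).tendsto).comp hxt
  have hmul := (hslope.comp hxt').mul hpowt
  have hval : gp * ρ ^ (gp - 1) * ρ ^ (1 - g) = gp * ρ ^ (gp - g) := by
    rw [mul_assoc, ← Real.rpow_add hρ]
    ring_nf
  rw [hval] at hmul
  refine hmul.congr' ?_
  filter_upwards [self_mem_nhdsWithin] with n hn
  obtain ⟨h1, h2⟩ := key n hn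
  have hne : x n - ρ ≠ 0 := sub_ne_zero.mpr (ne_of_gt h2)
  have hne' : (n:ℝ) ≠ 0 := ne_of_gt hn
  have hr : x n ^ (1 - g) = (x n - ρ) / n := by
    rw [h1]; field_simp
  simp only [Function.comp]
  rw [hr]
  field_simp
end

section
/- Let γ⁺ > 0 and γ⁻ > 0 be real numbers and let ρ > 0. For each n > 0 let x(n) denote the unique positive solution of x^(γ⁺/γ⁻)·(x − ρ) = n·x. Then the limit as n → 0⁺ of (x(n) − ρ)/n exists and equals ρ^(1 − γ⁺/γ⁻). (That is, ∂ₙ ρ₊(ρ, 0) = ρ^(1 − γ⁺/γ⁻).) -/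
/-- `∂ₙ ρ₊(ρ, 0) = ρ^(1 − γ⁺/γ⁻)`: the difference quotient `(x(n) − ρ)/n`
tends to `ρ^(1 − γ⁺/γ⁻)` as `n → 0⁺`. -/
theorem biFluid_dominant_density_deriv_n_at_zero
    (gp gm ρ : ℝ) (hgp : 0 < gp) (hgm : 0 < gm) (hρ : 0 < ρ)
    (x : ℝ → ℝ)
    (hx : ∀ n : ℝ, 0 < n → 0 < x n ∧ x n ^ (gp / gm) * (x n - ρ) = n * x n) :
    Filter.Tendsto (fun n => (x n - ρ) / n)
      (nhdsWithin 0 (Set.Ioi 0)) (nhds (ρ ^ (1 - gp / gm))) := by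
  set g := gp / gm with hgdef
  have hg : 0 < g := div_pos hgp hgm
  -- key identity: x n - ρ = n * (x n)^(1-g)
  have key : ∀ n : ℝ, 0 < n → x n - ρ = n * x n ^ (1 - g) := by
    intro n hn
    obtain ⟨hxpos, heq⟩ := hx n hn
    have hpow : (0:ℝ) < x n ^ g := Real.rpow_pos_of_pos hxpos g
    have h1 : x n ^ (1 - g) = x n / x n ^ g := by
      rw [Real.rpow_sub hxpos, Real.rpow_one]
    rw [h1]
    field_simp
    nlinarith [heq]
  have hxgt : ∀ n : ℝ, 0 < n → ρ < x n := by
    intro n hn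
    have := key n hn
    have hxpos := (hx n hn).1
    nlinarith [Real.rpow_pos_of_pos hxpos (1 - g), hn]
  -- bound x n ≤ 2ρ for small n
  have hbound : ∀ n : ℝ, 0 < n → n ≤ (2*ρ) ^ g / 2 → x n ≤ 2 * ρ := by
    intro n hn hnsmall
    by_contra hcon
    push_neg at hcon
    obtain ⟨hxpos, heq⟩ := hx n hn
    have h2ρ : (0:ℝ) < 2 * ρ := by linarith
    have hxg : (2*ρ) ^ g < x n ^ g :=
      Real.rpow_lt_rpow (le_of_lt h2ρ) hcon hg
    have hgpos := Real.rpow_pos_of_pos hxpos g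
    nlinarith
  -- x n → ρ
  have hxρlim : Filter.Tendsto x (nhdsWithin 0 (Set.Ioi 0)) (nhds ρ) := by
    set C : ℝ := (2*ρ) ^ (1 - g) + ρ ^ (1 - g) with hC
    have hCpos : 0 < C := by
      have h1 := Real.rpow_pos_of_pos (by linarith : (0:ℝ) < 2*ρ) (1-g)
      have h2 := Real.rpow_pos_of_pos hρ (1-g)
      linarith
    have hub : ∀ n : ℝ, 0 < n → n ≤ (2*ρ) ^ g / 2 → x n ≤ ρ + n * C := by
      intro n hn hns
      have h2 := hbound n hn hns
      have h1 := hxgt n hn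
      have hk := key n hn
      have hxle : x n ^ (1 - g) ≤ C := by
        rcases le_or_gt 0 (1 - g) with h | h
        · have hle : x n ^ (1-g) ≤ (2*ρ) ^ (1-g) :=
            Real.rpow_le_rpow (le_of_lt (hx n hn).1) h2 h
          have := Real.rpow_pos_of_pos hρ (1-g)
          linarith
        · have hle : x n ^ (1-g) ≤ ρ ^ (1-g) :=
            Real.rpow_le_rpow_of_nonpos hρ h1.le h.le
          have := Real.rpow_pos_of_pos (by linarith : (0:ℝ) < 2*ρ) (1-g)
          linarith
      nlinarith
    have hsmall : ∀ᶠ n in nhdsWithin 0 (Set.Ioi 0),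
        ρ < x n ∧ x n ≤ ρ + n * C := by
      have hδ : (0:ℝ) < (2*ρ) ^ g / 2 := by
        have := Real.rpow_pos_of_pos (by linarith : (0:ℝ) < 2*ρ) g
        linarith
      filter_upwards [Ioo_mem_nhdsGT_of_mem ⟨le_refl (0:ℝ), hδ⟩] with n hn
      exact ⟨hxgt n hn.1, hub n hn.1 hn.2.le⟩
    have hlo : Filter.Tendsto (fun _ : ℝ => ρ) (nhdsWithin 0 (Set.Ioi 0)) (nhds ρ) :=
      tendsto_const_nhds
    have hhi : Filter.Tendsto (fun n : ℝ => ρ + n * C) (nhdsWithin 0 (Set.Ioi 0)) (nhds ρ) := by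
      have : Filter.Tendsto (fun n : ℝ => ρ + n * C) (nhds 0) (nhds (ρ + 0 * C)) := by
        exact Filter.Tendsto.const_add _ ((continuous_id.mul continuous_const).tendsto 0)
      simpa using this.mono_left nhdsWithin_le_nhds
    exact tendsto_of_tendsto_of_tendsto_of_le_of_le' hlo hhi
      (hsmall.mono fun n h => h.1.le) (hsmall.mono fun n h => h.2)
  -- conclude by continuity of rpow
  have hcont : Filter.Tendsto (fun n => x n ^ (1 - g)) (nhdsWithin 0 (Set.Ioi 0))
      (nhds (ρ ^ (1 - g))) := by
    have : ContinuousAt (fun y : ℝ => y ^ (1 - g)) ρ :=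
      Real.continuousAt_rpow_const ρ (1-g) (Or.inl hρ.ne')
    exact this.tendsto.comp hxρlim
  refine hcont.congr' ?_
  filter_upwards [self_mem_nhdsWithin] with n hn
  have hn' : (n:ℝ) ≠ 0 := ne_of_gt hn
  rw [key n hn]
  field_simp
end

section
/- Let γ⁺ > 0 and γ⁻ > 0 be real numbers. Define F on the set {(ρ, n) ∈ ℝ² : ρ ≥ 0, n ≥ 0} by F(0, 0) := 0 and, for (ρ, n) ≠ (0, 0), F(ρ, n) := the unique x > 0 satisfying x^(γ⁺/γ⁻)·(x − ρ) = n·x. Then F is continuous on {(ρ, n) : ρ ≥ 0, n ≥ 0} (with the subspace topology of ℝ²). -/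
open Real Filter Topology

private lemma bif_anti {g : ℝ} (hg : 0 < g) {ρ n x y : ℝ} (hρ : 0 ≤ ρ) (hn : 0 ≤ n)
    (hx : 0 < x) (hxy : x ≤ y) :
    ρ * y⁻¹ + n * y ^ (-g) ≤ ρ * x⁻¹ + n * x ^ (-g) := by
  have hy : 0 < y := lt_of_lt_of_le hx hxy
  have h1 : y⁻¹ ≤ x⁻¹ := by
    exact inv_anti₀ hx hxy
  have h2 : y ^ (-g) ≤ x ^ (-g) := by
    rw [Real.rpow_neg hx.le, Real.rpow_neg hy.le]
    have := Real.rpow_le_rpow hx.le hxy hg.le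
    exact inv_anti₀ (Real.rpow_pos_of_pos hx g) this
  have := mul_le_mul_of_nonneg_left h1 hρ
  have := mul_le_mul_of_nonneg_left h2 hn
  linarith

private lemma bif_anti_strict {g : ℝ} (hg : 0 < g) {ρ n x y : ℝ} (hρ : 0 ≤ ρ) (hn : 0 ≤ n)
    (hpos : 0 < ρ ∨ 0 < n) (hx : 0 < x) (hxy : x < y) :
    ρ * y⁻¹ + n * y ^ (-g) < ρ * x⁻¹ + n * x ^ (-g) := by
  have hy : 0 < y := lt_trans hx hxy
  have h1 : y⁻¹ < x⁻¹ := by gcongr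
  have h2 : y ^ (-g) < x ^ (-g) := by
    rw [Real.rpow_neg hx.le, Real.rpow_neg hy.le]
    have := Real.rpow_lt_rpow hx.le hxy hg
    exact inv_strictAnti₀ (Real.rpow_pos_of_pos hx g) this
  rcases hpos with h | h
  · have := mul_lt_mul_of_pos_left h1 h
    have := mul_le_mul_of_nonneg_left h2.le hn
    linarith
  · have := mul_le_mul_of_nonneg_left h1.le hρ
    have := mul_lt_mul_of_pos_left h2 h
    linarith

/-- Continuity of the dominant-density root function `F(ρ,n) = ρ₊(ρ,n)` on the
closed quadrant `{ρ ≥ 0, n ≥ 0}`, with `F(0,0) = 0`. -/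
theorem biFluid_dominant_density_continuousOn
    (gp gm : ℝ) (hgp : 0 < gp) (hgm : 0 < gm)
    (F : ℝ × ℝ → ℝ) (hF0 : F (0, 0) = 0)
    (hF : ∀ p : ℝ × ℝ, 0 ≤ p.1 → 0 ≤ p.2 → p ≠ (0, 0) →
      0 < F p ∧ F p ^ (gp / gm) * (F p - p.1) = p.2 * F p) :
    ContinuousOn F {p : ℝ × ℝ | 0 ≤ p.1 ∧ 0 ≤ p.2} := by
  set g := gp / gm with hgdef
  have hg : 0 < g := div_pos hgp hgm
  -- the root satisfies ρ/x + n·x^(-g) = 1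
  have key : ∀ p : ℝ × ℝ, 0 ≤ p.1 → 0 ≤ p.2 → p ≠ (0, 0) →
      p.1 * (F p)⁻¹ + p.2 * (F p) ^ (-g) = 1 := by
    intro p h1 h2 hne
    obtain ⟨hx, heq⟩ := hF p h1 h2 hne
    have hA : (0:ℝ) < F p ^ g := Real.rpow_pos_of_pos hx g
    rw [Real.rpow_neg hx.le]
    field_simp
    linear_combination -heq
  intro p₀ hp₀
  obtain ⟨hρ₀, hn₀⟩ := hp₀
  rw [ContinuousWithinAt, Metric.tendsto_nhds]
  intro ε hε
  rcases eq_or_ne p₀ (0, 0) with h0 | h0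
  · -- continuity at the origin
    subst h0
    rw [hF0]
    have hεg : (0:ℝ) < ε⁻¹ + ε ^ (-g) :=
      add_pos (inv_pos.mpr hε) (Real.rpow_pos_of_pos hε _)
    set c := ε⁻¹ + ε ^ (-g) with hc
    set δ := (2 * c)⁻¹ with hδ
    have hδpos : 0 < δ := by positivity
    have hev : ∀ᶠ p : ℝ × ℝ in 𝓝 (0, 0), p.1 < δ ∧ p.2 < δ := by
      have e1 : ∀ᶠ p : ℝ × ℝ in 𝓝 (0, 0), p.1 < δ :=
        (continuous_fst.tendsto _).eventually (eventually_lt_nhds hδpos)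
      have e2 : ∀ᶠ p : ℝ × ℝ in 𝓝 (0, 0), p.2 < δ :=
        (continuous_snd.tendsto _).eventually (eventually_lt_nhds hδpos)
      exact e1.and e2
    filter_upwards [self_mem_nhdsWithin, nhdsWithin_le_nhds hev] with p hS hlt
    rcases eq_or_ne p (0, 0) with hp0 | hp0
    · rw [hp0, hF0]
      simpa using hε
    · obtain ⟨hSρ, hSn⟩ := hS
      have hx := (hF p hSρ hSn hp0).1
      have hk := key p hSρ hSn hp0
      rw [Real.dist_eq, sub_zero, abs_of_pos hx]
      by_contra hcon
      push_neg at hcon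
      have hle : p.1 * (F p)⁻¹ + p.2 * (F p) ^ (-g) ≤ p.1 * ε⁻¹ + p.2 * ε ^ (-g) :=
        bif_anti hg hSρ hSn hε hcon
      have hb : p.1 * ε⁻¹ + p.2 * ε ^ (-g) ≤ δ * ε⁻¹ + δ * ε ^ (-g) := by
        have := (inv_pos.mpr hε).le
        have := (Real.rpow_pos_of_pos hε (-g)).le
        gcongr <;> [exact hlt.1.le; exact hlt.2.le]
      have hhalf : δ * ε⁻¹ + δ * ε ^ (-g) = 1 / 2 := by
        have h1 : δ * ε⁻¹ + δ * ε ^ (-g) = δ * c := by rw [hc]; ring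
        rw [h1, hδ, inv_mul_eq_div, div_eq_iff (by positivity : (2 * c) ≠ 0)]
        ring
      rw [hk] at hle
      rw [hhalf] at hb
      linarith
  · -- continuity at a point ≠ (0,0)
    have hx₀ := (hF p₀ hρ₀ hn₀ h0).1
    have hk₀ := key p₀ hρ₀ hn₀ h0
    set x₀ := F p₀ with hx₀def
    set ε' := min ε (x₀ / 2) with hε'
    have hε'pos : 0 < ε' := lt_min hε (by linarith)
    have hε'le : ε' ≤ x₀ / 2 := min_le_right _ _
    set a := x₀ - ε' with ha
    set b := x₀ + ε' with hb
    have hapos : 0 < a := by simp only [ha]; linarith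
    have hax : a < x₀ := by simp only [ha]; linarith
    have hxb : x₀ < b := by simp only [hb]; linarith
    have hpos : 0 < p₀.1 ∨ 0 < p₀.2 := by
      rcases hρ₀.lt_or_eq with h | h
      · exact Or.inl h
      rcases hn₀.lt_or_eq with h' | h'
      · exact Or.inr h'
      exact absurd (Prod.ext h.symm h'.symm) h0
    have h1a : 1 < p₀.1 * a⁻¹ + p₀.2 * a ^ (-g) := by
      have := bif_anti_strict hg hρ₀ hn₀ hpos hapos hax
      rw [hk₀] at this; exact this
    have h1b : p₀.1 * b⁻¹ + p₀.2 * b ^ (-g) < 1 := by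
      have := bif_anti_strict hg hρ₀ hn₀ hpos hx₀ hxb
      rw [hk₀] at this; exact this
    have hca : Continuous fun p : ℝ × ℝ => p.1 * a⁻¹ + p.2 * a ^ (-g) := by fun_prop
    have hcb : Continuous fun p : ℝ × ℝ => p.1 * b⁻¹ + p.2 * b ^ (-g) := by fun_prop
    have eva : ∀ᶠ p : ℝ × ℝ in 𝓝 p₀, 1 < p.1 * a⁻¹ + p.2 * a ^ (-g) :=
      (hca.tendsto p₀).eventually (eventually_gt_nhds h1a)
    have evb : ∀ᶠ p : ℝ × ℝ in 𝓝 p₀, p.1 * b⁻¹ + p.2 * b ^ (-g) < 1 :=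
      (hcb.tendsto p₀).eventually (eventually_lt_nhds h1b)
    have evne : ∀ᶠ p : ℝ × ℝ in 𝓝 p₀, p ≠ (0, 0) := eventually_ne_nhds h0
    filter_upwards [self_mem_nhdsWithin, nhdsWithin_le_nhds eva,
      nhdsWithin_le_nhds evb, nhdsWithin_le_nhds evne] with p hS hpa hpb hpne
    obtain ⟨hSρ, hSn⟩ := hS
    have hx := (hF p hSρ hSn hpne).1
    have hk := key p hSρ hSn hpne
    have hlo : a < F p := by
      by_contra hcon
      push_neg at hcon
      have := bif_anti hg hSρ hSn hx hcon
      rw [hk] at this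
      linarith
    have hhi : F p < b := by
      by_contra hcon
      push_neg at hcon
      have := bif_anti hg hSρ hSn (lt_trans hapos (by linarith : a < b)) hcon
      rw [hk] at this
      linarith
    rw [Real.dist_eq, abs_lt]
    have hε'ε : ε' ≤ ε := min_le_left _ _
    constructor <;> simp only [ha, hb] at hlo hhi <;> linarith
end
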